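/- arXiv:2603.24161 — 7 statements merged into one kernel-verified Lean document; each statement's English description precedes it below -/
import Mathlib

section
/- Let h ≥ 1 be an integer, set n = 2^h, let p, r be positive integers, set u_p = 2^(1−p) and u_{p+r} = 2^(1−p−r), and let a_1, …, a_n be real numbers with exact sum s = Σ_{i=1}^{n} a_i. On a probability space, for each level j = 1, …, h and each index i = 1, …, 2^(h−j), let δ^j_i and β^j_i be real random variables such that almost surely |δ^j_i| ≤ u_p, |β^j_i| ≤ u_{p+r}, and |δ^j_i − β^j_i| ≤ u_p, and such that the random variables α^j_i := δ^j_i − β^j_i, enumerated in the order of increasing level j (and increasing i within each level), are mean independent. Define the computed pairwise sum ŝ = Σ_{i=1}^{2^h} a_i ∏_{j=1}^{h} (1 + δ^j_{⌈i/2^j⌉}). Then for every 0 < λ < 1, with probability at least 1 − λ, |ŝ − s| ≤ (Σ_{i=1}^{n} |a_i|) · ( √(u_p · γ_{2h}(u_p)) · √(ln(2/λ)) + γ_h(u_p + u_{p+r}) − γ_h(u_p) ). -/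
/-!
Write `α = δ - β` and let `ŝ_α` be the pairwise sum computed with the errors `α` in place of `δ`.
Then `ŝ - s = (ŝ - ŝ_α) + (ŝ_α - s)`. Comparing the products along each root-to-leaf path factor
by factor bounds the bias term `ŝ - ŝ_α` by `(∑ |a_i|) (γ_h(u_p + u_{p+r}) - γ_h(u_p))`
deterministically. Telescoping each product writes `ŝ_α - s` as `∑ T^j_i α^j_i` over the nodes
`(j, i)` of the tree, where `T^j_i`, the value entering node `(j, i)`, depends only on the errors
at earlier nodes. Mean independence makes this a sum of martingale increments, bounded by
`u_p (1 + u_p)^(j-1)` times the mass `∑ |a_l|` below the node, so Azuma–Hoeffding applies; the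
squared bounds sum to at most `(∑ |a_i|)² u_p γ_{2h}(u_p) / 2`.
-/

open MeasureTheory

/-- `γ_m(x) = (1+x)^m - 1`. -/
noncomputable def gammaFn (m : ℕ) (x : ℝ) : ℝ := (1 + x) ^ m - 1

open ProbabilityTheory Real
open scoped NNReal ENNReal

theorem Real.exp_mul_le_cosh_add_mul {y b : ℝ} (hy : |y| ≤ b) (t : ℝ) :
    exp (t * y) ≤ cosh (t * b) + sinh (t * b) / b * y := by
  obtain ⟨hyl, hyu⟩ := abs_le.mp hy
  rcases ((abs_nonneg y).trans hy).eq_or_lt with rfl | hb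
  · simp [show y = 0 by linarith]
  -- `t * y` is the convex combination of `± t * b` with weights `(b ± y) / (2 * b)`
  have key := convexOn_exp.2 (Set.mem_univ (t * b)) (Set.mem_univ (-(t * b)))
    (div_nonneg (by linarith : 0 ≤ b + y) (by linarith : (0 : ℝ) ≤ 2 * b))
    (div_nonneg (by linarith : 0 ≤ b - y) (by linarith : (0 : ℝ) ≤ 2 * b))
    (by field_simp; ring)
  simp only [smul_eq_mul] at key
  calc exp (t * y) = exp ((b + y) / (2 * b) * (t * b) + (b - y) / (2 * b) * -(t * b)) := by
        congr 1; field_simp; ring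
    _ ≤ _ := key
    _ = _ := by rw [cosh_eq, sinh_eq]; field_simp; ring

namespace ProbabilityTheory

variable {Ω : Type*} {m mΩ : MeasurableSpace Ω} {μ : Measure Ω}

theorem condExp_exp_mul_le_of_condExp_eq_zero [IsFiniteMeasure μ] (hm : m ≤ mΩ) {Y : Ω → ℝ} {b : ℝ}
    (hY : Measurable Y) (hYb : ∀ᵐ ω ∂μ, |Y ω| ≤ b) (hY0 : μ[Y|m] =ᵐ[μ] 0) (t : ℝ) :
    μ[fun ω => exp (t * Y ω)|m] ≤ᵐ[μ] fun _ => exp (b ^ 2 * t ^ 2 / 2) := by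
  have hYint : Integrable Y μ := .of_bound hY.aestronglyMeasurable b (by simpa using hYb)
  have hexp_int : Integrable (fun ω => exp (t * Y ω)) μ :=
    integrable_exp_mul_of_mem_Icc hY.aemeasurable (hYb.mono fun _ => abs_le.mp)
  set C := cosh (t * b)
  set S := sinh (t * b) / b
  have hchord : (fun ω => exp (t * Y ω)) ≤ᵐ[μ] fun ω => C + S * Y ω := by
    filter_upwards [hYb] with ω hω using exp_mul_le_cosh_add_mul hω t
  have hcond_chord : μ[fun ω => C + S * Y ω|m] =ᵐ[μ] fun _ => C := by
    filter_upwards [condExp_add (integrable_const C) (hYint.const_mul S) m,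
      condExp_smul (μ := μ) S Y m, hY0] with ω h1 h2 h3
    simp_all [condExp_const hm, Pi.add_def, Pi.smul_def]
  filter_upwards [condExp_mono hexp_int ((integrable_const C).add (hYint.const_mul S)) hchord,
    hcond_chord] with ω h1 h2
  calc _ ≤ C := h1.trans h2.le
    _ ≤ exp ((t * b) ^ 2 / 2) := cosh_le_exp_half_sq _
    _ = _ := by ring_nf

theorem HasSubgaussianMGF.add_of_condExp_eq_zero [IsFiniteMeasure μ]
    (hm : m ≤ mΩ) {X Y : Ω → ℝ} {c : ℝ≥0} {b : ℝ} (hX : HasSubgaussianMGF X c μ)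
    (hXm : Measurable[m] X) (hY : Measurable Y) (hYb : ∀ᵐ ω ∂μ, |Y ω| ≤ b)
    (hY0 : μ[Y|m] =ᵐ[μ] 0) :
    HasSubgaussianMGF (fun ω => X ω + Y ω) (c + ‖b‖₊ ^ 2) μ := by
  have hint : ∀ t, Integrable (fun ω => exp (t * X ω) * exp (t * Y ω)) μ := fun t =>
    (hX.integrable_exp_mul t).mul_bdd (c := exp (|t| * b)) (by fun_prop) <| by
      filter_upwards [hYb] with ω hω
      rw [norm_eq_abs, abs_exp, exp_le_exp]
      exact (le_abs_self _).trans (by rw [abs_mul]; gcongr)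
  have hexp_mul : ∀ t ω, exp (t * (X ω + Y ω)) = exp (t * X ω) * exp (t * Y ω) := fun t ω => by
    rw [mul_add, exp_add]
  refine ⟨fun t => by simpa only [hexp_mul] using hint t, fun t => ?_⟩
  have hYexp_int : Integrable (fun ω => exp (t * Y ω)) μ :=
    integrable_exp_mul_of_mem_Icc hY.aemeasurable (hYb.mono fun _ => abs_le.mp)
  have hpull := condExp_mul_of_stronglyMeasurable_left (m := m)
    (hXm.const_mul t).exp.stronglyMeasurable (hint t) hYexp_int
  calc mgf (fun ω => X ω + Y ω) μ t
      = ∫ ω, exp (t * X ω) * μ[fun ω => exp (t * Y ω)|m] ω ∂μ := by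
        simp only [mgf, hexp_mul]
        rw [← integral_condExp hm]
        exact integral_congr_ae hpull
    _ ≤ ∫ ω, exp (t * X ω) * exp (b ^ 2 * t ^ 2 / 2) ∂μ := by
        refine integral_mono_ae (integrable_condExp.congr hpull)
          ((hX.integrable_exp_mul t).mul_const _) ?_
        filter_upwards [condExp_exp_mul_le_of_condExp_eq_zero hm hY hYb hY0 t] with ω hω
        exact mul_le_mul_of_nonneg_left hω (exp_pos _).le
    _ = mgf X μ t * exp (b ^ 2 * t ^ 2 / 2) := integral_mul_const _ _
    _ ≤ exp (c * t ^ 2 / 2) * exp (b ^ 2 * t ^ 2 / 2) := by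
        gcongr; exact hX.mgf_le t
    _ = exp (↑(c + ‖b‖₊ ^ 2) * t ^ 2 / 2) := by
        rw [← exp_add]; push_cast; rw [norm_eq_abs, sq_abs]; ring_nf

theorem HasSubgaussianMGF.mono {X : Ω → ℝ} {c c' : ℝ≥0}
    (hX : HasSubgaussianMGF X c μ) (hc : c ≤ c') : HasSubgaussianMGF X c' μ :=
  ⟨hX.integrable_exp_mul, fun t => (hX.mgf_le t).trans (by gcongr)⟩

/-- **Azuma–Hoeffding inequality** for bounded increments with vanishing conditional means. -/
theorem hasSubgaussianMGF_sum_of_condExp_eq_zero [IsProbabilityMeasure μ] {ι : Type*}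
    [LinearOrder ι] (s : Finset ι) {Y : ι → Ω → ℝ} {F : ι → MeasurableSpace Ω} {b : ι → ℝ}
    (hF : ∀ k ∈ s, F k ≤ mΩ) (hY : ∀ k ∈ s, Measurable (Y k))
    (hadapted : ∀ k ∈ s, ∀ k' ∈ s, k' < k → Measurable[F k] (Y k'))
    (hb : ∀ k ∈ s, ∀ᵐ ω ∂μ, |Y k ω| ≤ b k) (hmean : ∀ k ∈ s, μ[Y k|F k] =ᵐ[μ] 0) :
    HasSubgaussianMGF (fun ω => ∑ k ∈ s, Y k ω) (∑ k ∈ s, ‖b k‖₊ ^ 2) μ := by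
  classical
  induction s using Finset.induction_on_max with
  | empty => simp
  | insert k s hlt ih =>
    have hk : k ∉ s := fun h => lt_irrefl k (hlt k h)
    have hsub : ∀ k' ∈ s, k' ∈ insert k s := fun _ => Finset.mem_insert_of_mem
    have hkmem := Finset.mem_insert_self k s
    have ih := ih (fun k' h => hF k' (hsub k' h)) (fun k' h => hY k' (hsub k' h))
      (fun k' h k'' h' => hadapted k' (hsub k' h) k'' (hsub k'' h'))
      (fun k' h => hb k' (hsub k' h)) (fun k' h => hmean k' (hsub k' h))
    simp_rw [Finset.sum_insert hk, add_comm (Y k _), add_comm (‖b k‖₊ ^ 2)]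
    exact ih.add_of_condExp_eq_zero (hF k hkmem)
      (Finset.measurable_sum s fun k' h => hadapted k hkmem k' (hsub k' h) (hlt k' h))
      (hY k hkmem) (hb k hkmem) (hmean k hkmem)

theorem HasSubgaussianMGF.ofReal_one_sub_le_measure_abs_le
    [IsProbabilityMeasure μ] {X : Ω → ℝ} {c : ℝ≥0} (hX : HasSubgaussianMGF X c μ) {lam : ℝ}
    (hlam : 0 < lam) :
    ENNReal.ofReal (1 - lam) ≤ μ {ω | |X ω| ≤ √(2 * c * log (2 / lam))} := by
  rcases eq_or_ne c 0 with rfl | hc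
  · calc ENNReal.ofReal (1 - lam) ≤ μ Set.univ := by
          rw [measure_univ]; exact ENNReal.ofReal_le_one.2 (by linarith)
      _ ≤ _ := measure_mono_ae <| by
          filter_upwards [hX.ae_eq_zero_of_hasSubgaussianMGF_zero] with ω hω _
          show |X ω| ≤ _
          rw [hω, Pi.zero_apply, abs_zero]
          exact sqrt_nonneg _
  rcases le_or_gt 1 lam with h1 | h1
  · simp [ENNReal.ofReal_eq_zero.2 (by linarith : 1 - lam ≤ 0)]
  set t := √(2 * c * log (2 / lam))
  have hL : 0 < log (2 / lam) := log_pos (by rw [lt_div_iff₀ hlam]; linarith)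
  have htail : ∀ Z : Ω → ℝ, HasSubgaussianMGF Z c μ →
      μ {ω | t ≤ Z ω} ≤ ENNReal.ofReal (lam / 2) := fun Z hZ => by
    rw [ENNReal.le_ofReal_iff_toReal_le (measure_ne_top μ _) (by linarith)]
    refine (hZ.measure_ge_le (sqrt_nonneg _)).trans_eq ?_
    have hc' : (0 : ℝ) < c := by positivity
    rw [sq_sqrt (by positivity), show -(2 * c * log (2 / lam)) / (2 * c) = -log (2 / lam) by
      field_simp, exp_neg, exp_log (by positivity), inv_div]
  have hcompl : {ω | |X ω| ≤ t}ᶜ ⊆ {ω | t ≤ X ω} ∪ {ω | t ≤ (-X) ω} := fun ω hω => by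
    simp only [Set.mem_compl_iff, Set.mem_ofPred_eq, not_le, lt_abs] at hω
    simp only [Set.mem_union, Set.mem_ofPred_eq, Pi.neg_apply]
    rcases hω with h | h
    · exact Or.inl h.le
    · exact Or.inr h.le
  have : μ {ω | |X ω| ≤ t}ᶜ ≤ ENNReal.ofReal lam := calc
    _ ≤ μ {ω | t ≤ X ω} + μ {ω | t ≤ (-X) ω} := (measure_mono hcompl).trans (measure_union_le _ _)
    _ ≤ ENNReal.ofReal (lam / 2) + ENNReal.ofReal (lam / 2) :=
      add_le_add (htail X hX) (htail _ hX.neg)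
    _ = ENNReal.ofReal lam := by rw [← ENNReal.ofReal_add (by linarith) (by linarith)]; ring_nf
  rw [ENNReal.ofReal_sub _ hlam.le, ENNReal.ofReal_one, tsub_le_iff_right]
  calc (1 : ℝ≥0∞) = μ ({ω | |X ω| ≤ t} ∪ {ω | |X ω| ≤ t}ᶜ) := by simp
    _ ≤ _ := (measure_union_le _ _).trans (add_le_add le_rfl this)

end ProbabilityTheory

namespace Finset

variable {ι : Type*} {s : Finset ι} {c d : ι → ℝ} {u v : ℝ}

theorem abs_prod_one_add_le_pow (hc : ∀ k ∈ s, |c k| ≤ u) :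
    |∏ k ∈ s, (1 + c k)| ≤ (1 + u) ^ #s := by
  rw [abs_prod, ← prod_const]
  refine prod_le_prod (fun _ _ => abs_nonneg _) fun k hk => ?_
  exact (abs_add_le _ _).trans (by rw [abs_one]; linarith [hc k hk])

theorem abs_prod_one_add_sub_prod_one_add_le (hc : ∀ k ∈ s, |c k| ≤ u)
    (hdc : ∀ k ∈ s, |d k - c k| ≤ v) :
    |∏ k ∈ s, (1 + d k) - ∏ k ∈ s, (1 + c k)| ≤ (1 + u + v) ^ #s - (1 + u) ^ #s := by
  classical
  induction s using Finset.induction_on with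
  | empty => simp
  | insert k s hk ih =>
    simp only [mem_insert, forall_eq_or_imp] at hc hdc
    have hu : 0 ≤ u := (abs_nonneg _).trans hc.1
    have hv : 0 ≤ v := (abs_nonneg _).trans hdc.1
    have hP := ih hc.2 hdc.2
    have hQ := abs_prod_one_add_le_pow hc.2
    have hd : |1 + d k| ≤ 1 + u + v := by
      have := abs_sub_abs_le_abs_sub (d k) (c k)
      exact (abs_add_le _ _).trans (by rw [abs_one]; linarith [hc.1, hdc.1])
    set P := ∏ k ∈ s, (1 + d k)
    set Q := ∏ k ∈ s, (1 + c k)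
    rw [prod_insert hk, prod_insert hk, card_insert_of_notMem hk]
    calc |(1 + d k) * P - (1 + c k) * Q| = |(1 + d k) * (P - Q) + (d k - c k) * Q| := by ring_nf
      _ ≤ |1 + d k| * |P - Q| + |d k - c k| * |Q| := by
        rw [← abs_mul, ← abs_mul]; exact abs_add_le _ _
      _ ≤ (1 + u + v) * ((1 + u + v) ^ #s - (1 + u) ^ #s) + v * (1 + u) ^ #s := by
        gcongr
        exact hdc.1
      _ = _ := by ring

end Finset

theorem sum_sq_mul_one_add_pow_le {u : ℝ} (hu : 0 ≤ u) (h : ℕ) :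
    ∑ j ∈ Finset.Icc 1 h, (u * (1 + u) ^ (j - 1)) ^ 2 ≤ u * gammaFn (2 * h) u / 2 := by
  induction h with
  | zero => simp [gammaFn]
  | succ h ih =>
    rw [Finset.sum_Icc_succ_top (by omega), Nat.add_sub_cancel]
    have hw : 0 ≤ (1 + u) ^ (2 * h) := by positivity
    have : gammaFn (2 * (h + 1)) u = gammaFn (2 * h) u + (1 + u) ^ (2 * h) * (2 * u + u ^ 2) := by
      simp only [gammaFn]; ring
    rw [this, show (u * (1 + u) ^ h) ^ 2 = u ^ 2 * (1 + u) ^ (2 * h) by ring]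
    nlinarith [mul_nonneg (pow_nonneg hu 3) hw]

namespace PairwiseSum

open Finset

variable {Ω : Type*} {h : ℕ}

/-- The internal nodes `(j, i)` of the summation tree over the leaves `1, …, 2 ^ h`: node `(j, i)`
is the `i`-th addition at depth `j`, and leaf `l` lies below node `(j, l ⌈/⌉ 2 ^ j)`. -/
def nodes (h : ℕ) : Finset (ℕ × ℕ) :=
  (Icc 1 h ×ˢ Icc 1 (2 ^ h)).filter fun q => q.2 ≤ 2 ^ (h - q.1)

theorem mem_nodes {q : ℕ × ℕ} : q ∈ nodes h ↔ q.1 ∈ Icc 1 h ∧ q.2 ∈ Icc 1 (2 ^ (h - q.1)) := by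
  have : 2 ^ (h - q.1) ≤ 2 ^ h := Nat.pow_le_pow_right two_pos (Nat.sub_le _ _)
  simp only [nodes, mem_filter, mem_product, mem_Icc]
  omega

theorem sum_nodes {M : Type*} [AddCommMonoid M] (h : ℕ) (f : ℕ → ℕ → M) :
    ∑ q ∈ nodes h, f q.1 q.2 = ∑ j ∈ Icc 1 h, ∑ i ∈ Icc 1 (2 ^ (h - j)), f j i :=
  sum_finset_product' _ _ _ fun _ => mem_nodes

theorem ae_forall_mem_nodes [MeasurableSpace Ω] {μ : Measure Ω} {P : ℕ → ℕ → Ω → Prop}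
    (hP : ∀ j ∈ Icc 1 h, ∀ i ∈ Icc 1 (2 ^ (h - j)), ∀ᵐ ω ∂μ, P j i ω) :
    ∀ᵐ ω ∂μ, ∀ q ∈ nodes h, P q.1 q.2 ω :=
  (Filter.eventually_all_finset _).2 fun _ hq => hP _ (mem_nodes.1 hq).1 _ (mem_nodes.1 hq).2

theorem ceilDiv_two_pow_mem_Icc {j l : ℕ} (hl : l ∈ Icc 1 (2 ^ h)) (hj : j ≤ h) :
    l ⌈/⌉ 2 ^ j ∈ Icc 1 (2 ^ (h - j)) := by
  have hpos : 0 < 2 ^ j := by positivity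
  have hpow : 2 ^ j * 2 ^ (h - j) = 2 ^ h := by rw [← pow_add, Nat.add_sub_cancel' hj]
  rw [mem_Icc] at hl ⊢
  refine ⟨Nat.one_le_iff_ne_zero.2 fun h0 => ?_, (ceilDiv_le_iff_le_mul hpos).2 (hpow ▸ hl.2)⟩
  have := (ceilDiv_le_iff_le_mul hpos).1 h0.le
  omega

theorem mk_ceilDiv_mem_nodes {j l : ℕ} (hl : l ∈ Icc 1 (2 ^ h)) (hj : j ∈ Icc 1 h) :
    (j, l ⌈/⌉ 2 ^ j) ∈ nodes h :=
  mem_nodes.2 ⟨hj, ceilDiv_two_pow_mem_Icc hl (mem_Icc.1 hj).2⟩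

/-- The value entering node `(j, i)` (the paper's `T^j_i`): the leaves below it summed with the
relative errors `x` at the lower levels. -/
noncomputable def nodeSum (h : ℕ) (a : ℕ → ℝ) (x : ℕ → ℕ → Ω → ℝ) (j i : ℕ) (ω : Ω) : ℝ :=
  ∑ l ∈ Icc 1 (2 ^ h) with l ⌈/⌉ 2 ^ j = i,
    a l * ∏ j' ∈ Icc 1 h with j' < j, (1 + x j' (l ⌈/⌉ 2 ^ j') ω)

noncomputable def nodeAbsSum (h : ℕ) (a : ℕ → ℝ) (j i : ℕ) : ℝ :=
  ∑ l ∈ Icc 1 (2 ^ h) with l ⌈/⌉ 2 ^ j = i, |a l|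

theorem sum_nodeAbsSum {j : ℕ} (a : ℕ → ℝ) (hj : j ≤ h) :
    ∑ i ∈ Icc 1 (2 ^ (h - j)), nodeAbsSum h a j i = ∑ l ∈ Icc 1 (2 ^ h), |a l| :=
  sum_fiberwise_of_maps_to (fun _ hl => ceilDiv_two_pow_mem_Icc hl hj) _

theorem sum_mul_prod_sub_sum_eq_sum_nodes (h : ℕ) (a : ℕ → ℝ) (x : ℕ → ℕ → Ω → ℝ) (ω : Ω) :
    ∑ l ∈ Icc 1 (2 ^ h), a l * ∏ j ∈ Icc 1 h, (1 + x j (l ⌈/⌉ 2 ^ j) ω) -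
        ∑ l ∈ Icc 1 (2 ^ h), a l =
      ∑ q ∈ nodes h, nodeSum h a x q.1 q.2 ω * x q.1 q.2 ω := by
  have htelescope : ∀ l, ∏ j ∈ Icc 1 h, (1 + x j (l ⌈/⌉ 2 ^ j) ω) - 1 =
      ∑ j ∈ Icc 1 h, x j (l ⌈/⌉ 2 ^ j) ω *
        ∏ j' ∈ Icc 1 h with j' < j, (1 + x j' (l ⌈/⌉ 2 ^ j') ω) := fun l => by
    have := prod_add_ordered (Icc 1 h) (fun _ => 1) fun j => x j (l ⌈/⌉ 2 ^ j) ω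
    simp only [prod_const_one, mul_one] at this
    rw [this, add_sub_cancel_left]
  rw [sum_nodes h fun j i => nodeSum h a x j i ω * x j i ω, ← sum_sub_distrib]
  simp_rw [← mul_sub_one, htelescope, mul_sum]
  rw [sum_comm]
  refine sum_congr rfl fun j hj => ?_
  rw [← sum_fiberwise_of_maps_to fun l hl => ceilDiv_two_pow_mem_Icc hl (mem_Icc.1 hj).2]
  refine sum_congr rfl fun i _ => ?_
  rw [nodeSum, sum_mul]
  refine sum_congr rfl fun l hl => ?_
  rw [(mem_filter.1 hl).2]
  ring

theorem abs_sum_mul_prod_sub_le (a : ℕ → ℝ) {c d : ℕ → ℕ → ℝ} {u v : ℝ}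
    (hc : ∀ q ∈ nodes h, |c q.1 q.2| ≤ u) (hdc : ∀ q ∈ nodes h, |d q.1 q.2 - c q.1 q.2| ≤ v) :
    |∑ l ∈ Icc 1 (2 ^ h), a l * ∏ j ∈ Icc 1 h, (1 + d j (l ⌈/⌉ 2 ^ j)) -
        ∑ l ∈ Icc 1 (2 ^ h), a l * ∏ j ∈ Icc 1 h, (1 + c j (l ⌈/⌉ 2 ^ j))| ≤
      (∑ l ∈ Icc 1 (2 ^ h), |a l|) * ((1 + u + v) ^ h - (1 + u) ^ h) := by
  rw [← sum_sub_distrib, sum_mul]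
  refine (abs_sum_le_sum_abs _ _).trans (sum_le_sum fun l hl => ?_)
  rw [← mul_sub, abs_mul]
  gcongr
  simpa using abs_prod_one_add_sub_prod_one_add_le (s := Icc 1 h)
    (fun j hj => hc _ (mk_ceilDiv_mem_nodes hl hj)) (fun j hj => hdc _ (mk_ceilDiv_mem_nodes hl hj))

theorem abs_nodeSum_le {a : ℕ → ℝ} {x : ℕ → ℕ → Ω → ℝ} {u : ℝ} {ω : Ω} (hu : 0 ≤ u)
    (hx : ∀ q ∈ nodes h, |x q.1 q.2 ω| ≤ u) (j i : ℕ) :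
    |nodeSum h a x j i ω| ≤ (1 + u) ^ (j - 1) * nodeAbsSum h a j i := by
  rw [nodeSum, nodeAbsSum, mul_sum]
  refine (abs_sum_le_sum_abs _ _).trans (sum_le_sum fun l hl => ?_)
  rw [abs_mul, mul_comm]
  gcongr
  have hcard : #{j' ∈ Icc 1 h | j' < j} ≤ j - 1 := by
    simpa using card_le_card (s := {j' ∈ Icc 1 h | j' < j}) (t := Ico 1 j) fun j' hj' => by
      simp only [mem_filter, mem_Icc, mem_Ico] at hj' ⊢; omega
  refine (abs_prod_one_add_le_pow fun j' hj' =>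
    hx _ (mk_ceilDiv_mem_nodes (mem_filter.1 hl).1 (mem_filter.1 hj').1)).trans ?_
  exact pow_le_pow_right₀ (by linarith) hcard

theorem sum_nodes_sq_le (a : ℕ → ℝ) {u : ℝ} (hu : 0 ≤ u) :
    ∑ q ∈ nodes h, (u * (1 + u) ^ (q.1 - 1) * nodeAbsSum h a q.1 q.2) ^ 2 ≤
      (∑ l ∈ Icc 1 (2 ^ h), |a l|) ^ 2 * (u * gammaFn (2 * h) u / 2) := by
  rw [sum_nodes h fun j i => (u * (1 + u) ^ (j - 1) * nodeAbsSum h a j i) ^ 2]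
  calc _ ≤ ∑ j ∈ Icc 1 h, (u * (1 + u) ^ (j - 1)) ^ 2 * (∑ l ∈ Icc 1 (2 ^ h), |a l|) ^ 2 := by
        refine sum_le_sum fun j hj => ?_
        simp_rw [mul_pow _ (nodeAbsSum h a j _), ← mul_sum]
        rw [← sum_nodeAbsSum a (mem_Icc.1 hj).2]
        gcongr
        exact sum_sq_le_sq_sum_of_nonneg fun i _ => sum_nonneg fun l _ => abs_nonneg (a l)
    _ ≤ _ := by
        rw [← sum_mul, mul_comm]
        gcongr
        exact sum_sq_mul_one_add_pow_le hu h

abbrev pastσ (h : ℕ) (x : ℕ → ℕ → Ω → ℝ) (k : ℕ ×ₗ ℕ) : MeasurableSpace Ω :=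
  ⨆ q ∈ {q : ℕ × ℕ | q ∈ nodes h ∧ toLex q < k}, MeasurableSpace.comap (x q.1 q.2) inferInstance

variable {x : ℕ → ℕ → Ω → ℝ}

theorem pastσ_toLex (j i : ℕ) :
    pastσ h x (toLex (j, i)) = ⨆ q ∈ {q : ℕ × ℕ |
      (1 ≤ q.1 ∧ q.1 ≤ h ∧ 1 ≤ q.2 ∧ q.2 ≤ 2 ^ (h - q.1)) ∧ (q.1 < j ∨ (q.1 = j ∧ q.2 < i))},
        MeasurableSpace.comap (x q.1 q.2) inferInstance := by
  simp only [pastσ, mem_nodes, mem_Icc, Prod.Lex.toLex_lt_toLex, and_assoc]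

theorem pastσ_le [mΩ : MeasurableSpace Ω] (hx : ∀ j i, Measurable (x j i)) (k : ℕ ×ₗ ℕ) :
    pastσ h x k ≤ mΩ :=
  iSup₂_le fun q _ => (hx q.1 q.2).comap_le

theorem measurable_pastσ {q : ℕ × ℕ} {k : ℕ ×ₗ ℕ} (hq : q ∈ nodes h) (hqk : toLex q < k) :
    Measurable[pastσ h x k] (x q.1 q.2) :=
  measurable_iff_comap_le.2 <| le_iSup₂
    (f := fun q (_ : q ∈ {q : ℕ × ℕ | q ∈ nodes h ∧ toLex q < k}) =>
      MeasurableSpace.comap (x q.1 q.2) inferInstance) q ⟨hq, hqk⟩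

theorem measurable_nodeSum_pastσ (a : ℕ → ℝ) {j : ℕ} (i : ℕ) {k : ℕ ×ₗ ℕ}
    (hjk : j ≤ (ofLex k).1) : Measurable[pastσ h x k] (nodeSum h a x j i) := by
  refine Finset.measurable_sum _ fun l hl => (Finset.measurable_prod _ fun j' hj' => ?_).const_mul _
  have hj' := mem_filter.1 hj'
  exact (measurable_pastσ (mk_ceilDiv_mem_nodes (mem_filter.1 hl).1 hj'.1)
    (Prod.Lex.lt_iff.2 (Or.inl (hj'.2.trans_le hjk)))).const_add 1

theorem abs_nodeSum_mul_le {a : ℕ → ℝ} {u : ℝ} {ω : Ω} (hu : 0 ≤ u)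
    (hx : ∀ q ∈ nodes h, |x q.1 q.2 ω| ≤ u) {q : ℕ × ℕ} (hq : q ∈ nodes h) :
    |nodeSum h a x q.1 q.2 ω * x q.1 q.2 ω| ≤ u * (1 + u) ^ (q.1 - 1) * nodeAbsSum h a q.1 q.2 := by
  have hT := abs_nodeSum_le (a := a) hu hx q.1 q.2
  rw [abs_mul]
  calc _ ≤ (1 + u) ^ (q.1 - 1) * nodeAbsSum h a q.1 q.2 * u :=
        mul_le_mul hT (hx q hq) (abs_nonneg _) ((abs_nonneg _).trans hT)
    _ = _ := by ring

theorem condExp_nodeSum_mul_eq_zero [MeasurableSpace Ω] {μ : Measure Ω} [IsFiniteMeasure μ]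
    (a : ℕ → ℝ) {u : ℝ} (hu : 0 ≤ u) (hx : ∀ j i, Measurable (x j i))
    (hxu : ∀ᵐ ω ∂μ, ∀ q ∈ nodes h, |x q.1 q.2 ω| ≤ u) {q : ℕ × ℕ} (hq : q ∈ nodes h)
    (hmean : μ[x q.1 q.2|pastσ h x (toLex q)] =ᵐ[μ] 0) :
    μ[fun ω => nodeSum h a x q.1 q.2 ω * x q.1 q.2 ω|pastσ h x (toLex q)] =ᵐ[μ] 0 := by
  have hT : Measurable[pastσ h x (toLex q)] (nodeSum h a x q.1 q.2) :=
    measurable_nodeSum_pastσ a q.2 le_rfl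
  have hx_int : Integrable (x q.1 q.2) μ := .of_bound (hx _ _).aestronglyMeasurable u <| by
    filter_upwards [hxu] with ω hω using hω q hq
  have hTx_int : Integrable (nodeSum h a x q.1 q.2 * x q.1 q.2) μ :=
    hx_int.bdd_mul (hT.mono (pastσ_le hx _) le_rfl).aestronglyMeasurable <| by
      filter_upwards [hxu] with ω hω using abs_nodeSum_le hu hω q.1 q.2
  refine (condExp_mul_of_stronglyMeasurable_left hT.stronglyMeasurable hTx_int hx_int).trans ?_
  filter_upwards [hmean] with ω hω
  simp [hω]

theorem hasSubgaussianMGF_sum_nodes [MeasurableSpace Ω] {μ : Measure Ω} [IsProbabilityMeasure μ]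
    (a : ℕ → ℝ) {u : ℝ} (hu : 0 ≤ u) (hx : ∀ j i, Measurable (x j i))
    (hxu : ∀ᵐ ω ∂μ, ∀ q ∈ nodes h, |x q.1 q.2 ω| ≤ u)
    (hmean : ∀ q ∈ nodes h, μ[x q.1 q.2|pastσ h x (toLex q)] =ᵐ[μ] 0) :
    HasSubgaussianMGF (fun ω => ∑ q ∈ nodes h, nodeSum h a x q.1 q.2 ω * x q.1 q.2 ω)
      (∑ q ∈ nodes h, ‖u * (1 + u) ^ (q.1 - 1) * nodeAbsSum h a q.1 q.2‖₊ ^ 2) μ := by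
  have := hasSubgaussianMGF_sum_of_condExp_eq_zero (μ := μ) ((nodes h).map toLex.toEmbedding)
    (Y := fun k ω => nodeSum h a x (ofLex k).1 (ofLex k).2 ω * x (ofLex k).1 (ofLex k).2 ω)
    (F := pastσ h x)
    (b := fun k => u * (1 + u) ^ ((ofLex k).1 - 1) * nodeAbsSum h a (ofLex k).1 (ofLex k).2)
    (fun k _ => pastσ_le hx k)
    (fun k _ => ((measurable_nodeSum_pastσ a _ le_rfl).mono (pastσ_le hx _) le_rfl).mul (hx _ _))
    (fun k _ k' hk' hlt => (measurable_nodeSum_pastσ a _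
      ((Prod.Lex.lt_iff.1 hlt).elim le_of_lt (·.1.le))).mul
        (measurable_pastσ (mem_map_equiv.1 hk') hlt))
    (fun k hk => by
      filter_upwards [hxu] with ω hω using abs_nodeSum_mul_le hu hω (mem_map_equiv.1 hk))
    (fun k hk => condExp_nodeSum_mul_eq_zero a hu hx hxu (mem_map_equiv.1 hk)
      (hmean _ (mem_map_equiv.1 hk)))
  simpa using this

theorem ofReal_one_sub_le_measure_abs_sum_nodes_le [MeasurableSpace Ω] {μ : Measure Ω}
    [IsProbabilityMeasure μ] (a : ℕ → ℝ) {u : ℝ} (hu : 0 ≤ u) (hx : ∀ j i, Measurable (x j i))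
    (hxu : ∀ᵐ ω ∂μ, ∀ q ∈ nodes h, |x q.1 q.2 ω| ≤ u)
    (hmean : ∀ q ∈ nodes h, μ[x q.1 q.2|pastσ h x (toLex q)] =ᵐ[μ] 0) {lam : ℝ} (hlam : 0 < lam) :
    ENNReal.ofReal (1 - lam) ≤ μ {ω | |∑ q ∈ nodes h, nodeSum h a x q.1 q.2 ω * x q.1 q.2 ω| ≤
      (∑ l ∈ Icc 1 (2 ^ h), |a l|) * (√(u * gammaFn (2 * h) u) * √(log (2 / lam)))} := by
  set A := ∑ l ∈ Icc 1 (2 ^ h), |a l|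
  have hγ : 0 ≤ u * gammaFn (2 * h) u := mul_nonneg hu (sub_nonneg.2 (one_le_pow₀ (by linarith)))
  have hV : 0 ≤ A ^ 2 * (u * gammaFn (2 * h) u / 2) := by positivity
  have hM := (hasSubgaussianMGF_sum_nodes a hu hx hxu hmean).mono
    (c' := (A ^ 2 * (u * gammaFn (2 * h) u / 2)).toNNReal) <| by
      rw [Real.le_toNNReal_iff_coe_le hV]
      push_cast
      simpa only [norm_eq_abs, sq_abs] using sum_nodes_sq_le a hu
  have hradius : √(2 * (A ^ 2 * (u * gammaFn (2 * h) u / 2)) * log (2 / lam)) =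
      A * (√(u * gammaFn (2 * h) u) * √(log (2 / lam))) := by
    rw [show 2 * (A ^ 2 * (u * gammaFn (2 * h) u / 2)) * log (2 / lam) =
      A ^ 2 * (u * gammaFn (2 * h) u * log (2 / lam)) by ring, sqrt_mul (sq_nonneg _),
      sqrt_sq (sum_nonneg fun _ _ => abs_nonneg _), sqrt_mul hγ]
  simpa only [Real.coe_toNNReal _ hV, hradius] using hM.ofReal_one_sub_le_measure_abs_le hlam

end PairwiseSum

open PairwiseSum Finset

theorem pairwise_limited_precision_sr_bound_general {Ω : Type*} [MeasurableSpace Ω]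
    (μ : Measure Ω) [IsProbabilityMeasure μ]
    (h p r : ℕ)
    (a : ℕ → ℝ) (δ β : ℕ → ℕ → Ω → ℝ)
    (hmeasδ : ∀ j i, Measurable (δ j i)) (hmeasβ : ∀ j i, Measurable (β j i))
    (hβbd : ∀ j ∈ Finset.Icc 1 h, ∀ i ∈ Finset.Icc 1 (2 ^ (h - j)),
      ∀ᵐ ω ∂μ, |β j i ω| ≤ (2 : ℝ) ^ (1 - (p : ℤ) - (r : ℤ)))
    (hαbd : ∀ j ∈ Finset.Icc 1 h, ∀ i ∈ Finset.Icc 1 (2 ^ (h - j)),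
      ∀ᵐ ω ∂μ, |δ j i ω - β j i ω| ≤ (2 : ℝ) ^ (1 - (p : ℤ)))
    (hmi : ∀ j ∈ Finset.Icc 1 h, ∀ i ∈ Finset.Icc 1 (2 ^ (h - j)),
      μ[(fun ω => δ j i ω - β j i ω) | ⨆ q ∈ {q : ℕ × ℕ |
            (1 ≤ q.1 ∧ q.1 ≤ h ∧ 1 ≤ q.2 ∧ q.2 ≤ 2 ^ (h - q.1)) ∧
            (q.1 < j ∨ (q.1 = j ∧ q.2 < i))},
          MeasurableSpace.comap (fun ω => δ q.1 q.2 ω - β q.1 q.2 ω)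
            inferInstance] =ᵐ[μ] 0)
    (lam : ℝ) (hlam0 : 0 < lam) :
    ENNReal.ofReal (1 - lam) ≤
      μ {ω | |(∑ i ∈ Finset.Icc 1 (2 ^ h),
            a i * ∏ j ∈ Finset.Icc 1 h, (1 + δ j ((i + 2 ^ j - 1) / 2 ^ j) ω)) -
          ∑ i ∈ Finset.Icc 1 (2 ^ h), a i| ≤
        (∑ i ∈ Finset.Icc 1 (2 ^ h), |a i|) *
          (Real.sqrt ((2 : ℝ) ^ (1 - (p : ℤ)) *
              gammaFn (2 * h) ((2 : ℝ) ^ (1 - (p : ℤ)))) *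
            Real.sqrt (Real.log (2 / lam)) +
          gammaFn h
            ((2 : ℝ) ^ (1 - (p : ℤ)) + (2 : ℝ) ^ (1 - (p : ℤ) - (r : ℤ))) -
          gammaFn h ((2 : ℝ) ^ (1 - (p : ℤ))))} := by
  simp only [← Nat.ceilDiv_eq_add_pred_div]
  set u := (2 : ℝ) ^ (1 - (p : ℤ))
  set v := (2 : ℝ) ^ (1 - (p : ℤ) - (r : ℤ))
  set x : ℕ → ℕ → Ω → ℝ := fun j i ω => δ j i ω - β j i ω
  have hbd : ∀ᵐ ω ∂μ, ∀ q ∈ nodes h, |x q.1 q.2 ω| ≤ u ∧ |β q.1 q.2 ω| ≤ v :=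
    ae_forall_mem_nodes fun j hj i hi => (hαbd j hj i hi).and (hβbd j hj i hi)
  have hmartingale := ofReal_one_sub_le_measure_abs_sum_nodes_le (x := x) a (by positivity)
    (fun j i => (hmeasδ j i).sub (hmeasβ j i)) (hbd.mono fun ω hω q hq => (hω q hq).1)
    (fun q hq => by rw [pastσ_toLex]; exact hmi _ (mem_nodes.1 hq).1 _ (mem_nodes.1 hq).2) hlam0
  refine hmartingale.trans (measure_mono_ae ?_)
  filter_upwards [hbd] with ω hω hMω
  change |_| ≤ _ at hMω ⊢
  rw [← sum_mul_prod_sub_sum_eq_sum_nodes] at hMω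
  have hbias := abs_sum_mul_prod_sub_le a (c := fun j i => x j i ω) (d := fun j i => δ j i ω)
    (fun q hq => (hω q hq).1) fun q hq => by simpa [x] using (hω q hq).2
  calc _ ≤ _ := abs_sub_le _ (∑ l ∈ Icc 1 (2 ^ h), a l * ∏ j ∈ Icc 1 h, (1 + x j (l ⌈/⌉ 2 ^ j) ω)) _
    _ ≤ _ := add_le_add hbias hMω
    _ = _ := by simp only [gammaFn]; ring

/-- Probabilistic error bound for pairwise (binary-tree) summation of
`n = 2^h` numbers under limited-precision stochastic rounding `SR_{p,r}`: the
rounding errors `δ^j_i` are bounded by `u_p = 2^(1-p)`, their biases `β^j_i`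
by `u_{p+r} = 2^(1-p-r)`, and the centered errors `α^j_i = δ^j_i - β^j_i`
(bounded by `u_p`) are mean independent in the order of increasing level `j`
(and increasing index `i` within each level). With probability at least
`1 - λ`, `|ŝ - s| ≤ (∑|a_i|)(√(u_p γ_{2h}(u_p)) √(ln(2/λ)) +
γ_h(u_p+u_{p+r}) - γ_h(u_p))`, where
`ŝ = ∑_{i=1}^{2^h} a_i ∏_{j=1}^h (1 + δ^j_{⌈i/2^j⌉})` and
`(i + 2^j - 1) / 2^j` is the natural-number ceiling `⌈i / 2^j⌉`. -/
theorem pairwise_limited_precision_sr_bound {Ω : Type*} [MeasurableSpace Ω]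
    (μ : Measure Ω) [IsProbabilityMeasure μ]
    (h p r : ℕ) (hh : 1 ≤ h) (hp : 1 ≤ p) (hr : 1 ≤ r)
    (a : ℕ → ℝ) (δ β : ℕ → ℕ → Ω → ℝ)
    (hmeasδ : ∀ j i, Measurable (δ j i)) (hmeasβ : ∀ j i, Measurable (β j i))
    (hδbd : ∀ j ∈ Finset.Icc 1 h, ∀ i ∈ Finset.Icc 1 (2 ^ (h - j)),
      ∀ᵐ ω ∂μ, |δ j i ω| ≤ (2 : ℝ) ^ (1 - (p : ℤ)))
    (hβbd : ∀ j ∈ Finset.Icc 1 h, ∀ i ∈ Finset.Icc 1 (2 ^ (h - j)),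
      ∀ᵐ ω ∂μ, |β j i ω| ≤ (2 : ℝ) ^ (1 - (p : ℤ) - (r : ℤ)))
    (hαbd : ∀ j ∈ Finset.Icc 1 h, ∀ i ∈ Finset.Icc 1 (2 ^ (h - j)),
      ∀ᵐ ω ∂μ, |δ j i ω - β j i ω| ≤ (2 : ℝ) ^ (1 - (p : ℤ)))
    (hmi : ∀ j ∈ Finset.Icc 1 h, ∀ i ∈ Finset.Icc 1 (2 ^ (h - j)),
      μ[(fun ω => δ j i ω - β j i ω) | ⨆ q ∈ {q : ℕ × ℕ |
            (1 ≤ q.1 ∧ q.1 ≤ h ∧ 1 ≤ q.2 ∧ q.2 ≤ 2 ^ (h - q.1)) ∧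
            (q.1 < j ∨ (q.1 = j ∧ q.2 < i))},
          MeasurableSpace.comap (fun ω => δ q.1 q.2 ω - β q.1 q.2 ω)
            inferInstance] =ᵐ[μ] 0)
    (lam : ℝ) (hlam0 : 0 < lam) (hlam1 : lam < 1) :
    ENNReal.ofReal (1 - lam) ≤
      μ {ω | |(∑ i ∈ Finset.Icc 1 (2 ^ h),
            a i * ∏ j ∈ Finset.Icc 1 h, (1 + δ j ((i + 2 ^ j - 1) / 2 ^ j) ω)) -
          ∑ i ∈ Finset.Icc 1 (2 ^ h), a i| ≤
        (∑ i ∈ Finset.Icc 1 (2 ^ h), |a i|) *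
          (Real.sqrt ((2 : ℝ) ^ (1 - (p : ℤ)) *
              gammaFn (2 * h) ((2 : ℝ) ^ (1 - (p : ℤ)))) *
            Real.sqrt (Real.log (2 / lam)) +
          gammaFn h
            ((2 : ℝ) ^ (1 - (p : ℤ)) + (2 : ℝ) ^ (1 - (p : ℤ) - (r : ℤ))) -
          gammaFn h ((2 : ℝ) ^ (1 - (p : ℤ))))} :=
  pairwise_limited_precision_sr_bound_general μ h p r a δ β hmeasδ hmeasβ hβbd hαbd hmi lam hlam0
end

section
/- Let I be a finite index set with |I| = m ≥ 1, let a, b ≥ 0, and for each k ∈ I let α_k, β_k be real numbers with |α_k| ≤ a and |β_k| ≤ b. Then | Σ_{K ⊊ I} ( ∏_{k∈K} (1 + α_k) · ∏_{j∈I∖K} β_j ) | ≤ (1 + a + b)^m − (1 + a)^m, where the sum ranges over all proper subsets K of I. Consequently, writing δ_k = α_k + β_k and γ_m(x) = (1+x)^m − 1, one has | ∏_{k∈I} (1 + δ_k) − ∏_{k∈I} (1 + α_k) | ≤ γ_m(a + b) − γ_m(a). -/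
/-- Bound on the bias term in the decomposition
`∏ (1 + δ_k) = ∏ (1 + α_k) + B` with `|α_k| ≤ a` and `|β_k| ≤ b`. -/
theorem bias_term_bound {ι : Type*} [DecidableEq ι] (I : Finset ι) (m : ℕ)
    (hm : 1 ≤ m) (hcard : I.card = m) (a b : ℝ) (ha : 0 ≤ a) (hb : 0 ≤ b)
    (α β : ι → ℝ) (hα : ∀ k ∈ I, |α k| ≤ a) (hβ : ∀ k ∈ I, |β k| ≤ b) :
    |∑ K ∈ I.powerset.erase I,
        (∏ k ∈ K, (1 + α k)) * ∏ j ∈ I \ K, β j| ≤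
      (1 + a + b) ^ m - (1 + a) ^ m ∧
    |(∏ k ∈ I, (1 + (α k + β k))) - ∏ k ∈ I, (1 + α k)| ≤
      gammaFn m (a + b) - gammaFn m a := by
  subst hcard
  have hself : I ∈ I.powerset := Finset.mem_powerset_self I
  -- bound on each term
  have key : ∀ K ∈ I.powerset.erase I,
      |(∏ k ∈ K, (1 + α k)) * ∏ j ∈ I \ K, β j| ≤
        (1 + a) ^ K.card * b ^ (I \ K).card := by
    intro K hK
    have hKI : K ⊆ I := Finset.mem_powerset.mp (Finset.mem_of_mem_erase hK)
    rw [abs_mul]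
    apply mul_le_mul
    · calc |∏ k ∈ K, (1 + α k)| ≤ ∏ k ∈ K, |1 + α k| := (Finset.abs_prod _ _).le
        _ ≤ ∏ _k ∈ K, (1 + a) := by
            apply Finset.prod_le_prod (fun k _ => abs_nonneg _)
            intro k hk
            calc |1 + α k| ≤ |(1:ℝ)| + |α k| := abs_add_le _ _
              _ ≤ 1 + a := by simpa using hα k (hKI hk)
        _ = (1 + a) ^ K.card := Finset.prod_const _
    · calc |∏ j ∈ I \ K, β j| ≤ ∏ j ∈ I \ K, |β j| := (Finset.abs_prod _ _).le
        _ ≤ ∏ _j ∈ I \ K, b := by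
            apply Finset.prod_le_prod (fun k _ => abs_nonneg _)
            intro j hj
            exact hβ j (Finset.mem_sdiff.mp hj).1
        _ = b ^ (I \ K).card := Finset.prod_const _
    · exact abs_nonneg _
    · positivity
  -- total sum of bounds
  have htot : ∑ K ∈ I.powerset, (1 + a) ^ K.card * b ^ (I \ K).card
      = (1 + a + b) ^ I.card := by
    have := Finset.prod_add (fun _ : ι => 1 + a) (fun _ : ι => b) I
    simp only [Finset.prod_const] at this
    exact this.symm
  have hsum1 : |∑ K ∈ I.powerset.erase I,
      (∏ k ∈ K, (1 + α k)) * ∏ j ∈ I \ K, β j| ≤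
      (1 + a + b) ^ I.card - (1 + a) ^ I.card := by
    calc |∑ K ∈ I.powerset.erase I, (∏ k ∈ K, (1 + α k)) * ∏ j ∈ I \ K, β j|
        ≤ ∑ K ∈ I.powerset.erase I, |(∏ k ∈ K, (1 + α k)) * ∏ j ∈ I \ K, β j| :=
          Finset.abs_sum_le_sum_abs _ _
      _ ≤ ∑ K ∈ I.powerset.erase I, (1 + a) ^ K.card * b ^ (I \ K).card :=
          Finset.sum_le_sum key
      _ = (∑ K ∈ I.powerset, (1 + a) ^ K.card * b ^ (I \ K).card)
            - (1 + a) ^ I.card * b ^ (I \ I).card :=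
          Finset.sum_erase_eq_sub hself
      _ = (1 + a + b) ^ I.card - (1 + a) ^ I.card := by
          rw [htot]; simp
  refine ⟨hsum1, ?_⟩
  have hdiff : (∏ k ∈ I, (1 + (α k + β k))) - ∏ k ∈ I, (1 + α k)
      = ∑ K ∈ I.powerset.erase I, (∏ k ∈ K, (1 + α k)) * ∏ j ∈ I \ K, β j := by
    have hexp := Finset.prod_add (fun k : ι => 1 + α k) β I
    have : ∏ k ∈ I, (1 + (α k + β k)) = ∏ k ∈ I, ((1 + α k) + β k) := by
      apply Finset.prod_congr rfl; intro k _; ring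
    rw [this, hexp, Finset.sum_erase_eq_sub hself]
    simp
  rw [hdiff]
  have : gammaFn I.card (a + b) - gammaFn I.card a
      = (1 + a + b) ^ I.card - (1 + a) ^ I.card := by
    simp [gammaFn]; ring_nf
  rw [this]
  exact hsum1
end

section
/- Let n ≥ 1 be an integer, let a_0, …, a_n, x be real numbers, and let δ_0 = 0 and δ_1, …, δ_{2n} be real numbers. Define the Horner recursion r̂_0 = a_n, and for k = 1, …, n: r̂_{2k−1} = r̂_{2k−2} · x · (1 + δ_{2k−1}) and r̂_{2k} = (r̂_{2k−1} + a_{n−k}) · (1 + δ_{2k}). Then the final value satisfies r̂_{2n} = Σ_{i=0}^{n} a_i x^i ∏_{k=2(n−i)}^{2n} (1 + δ_k). -/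
/-- Exact closed-form error expansion for Horner's algorithm evaluating
`P(x) = ∑_{i=0}^{n} a_i x^i` in finite-precision arithmetic, where
`δ_{2k-1}` is the relative error of the `k`-th multiplication and
`δ_{2k}` that of the `k`-th addition. -/
theorem horner_error_expansion (n : ℕ) (hn : 1 ≤ n) (a : ℕ → ℝ) (x : ℝ)
    (δ : ℕ → ℝ) (hδ0 : δ 0 = 0) (rhat : ℕ → ℝ)
    (h0 : rhat 0 = a n)
    (hodd : ∀ k ∈ Finset.Icc 1 n,
      rhat (2 * k - 1) = rhat (2 * k - 2) * x * (1 + δ (2 * k - 1)))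
    (heven : ∀ k ∈ Finset.Icc 1 n,
      rhat (2 * k) = (rhat (2 * k - 1) + a (n - k)) * (1 + δ (2 * k))) :
    rhat (2 * n) =
      ∑ i ∈ Finset.range (n + 1),
        a i * x ^ i * ∏ k ∈ Finset.Icc (2 * (n - i)) (2 * n), (1 + δ k) := by
  have aux : ∀ m, m ≤ n → rhat (2 * m) =
      ∑ j ∈ Finset.range (m + 1), a (n - m + j) * x ^ j *
        ∏ k ∈ Finset.Icc (2 * (m - j)) (2 * m), (1 + δ k) := by
    intro m
    induction m with
    | zero => intro _; simp [h0, hδ0]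
    | succ m ih =>
      intro hm
      have hm' : m ≤ n := Nat.le_of_succ_le hm
      have hmem : m + 1 ∈ Finset.Icc 1 n := by
        simp only [Finset.mem_Icc]; omega
      have he := heven (m + 1) hmem
      have ho := hodd (m + 1) hmem
      have e1 : 2 * (m + 1) - 1 = 2 * m + 1 := by omega
      have e2 : 2 * (m + 1) - 2 = 2 * m := by omega
      rw [e1, e2] at ho
      rw [e1] at he
      rw [he, ho, ih hm']
      conv_rhs => rw [Finset.sum_range_succ']
      have key : ∀ j ∈ Finset.range (m + 1),
          a (n - (m + 1) + (j + 1)) * x ^ (j + 1) *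
            ∏ k ∈ Finset.Icc (2 * ((m + 1) - (j + 1))) (2 * (m + 1)), (1 + δ k)
          = (a (n - m + j) * x ^ j *
              ∏ k ∈ Finset.Icc (2 * (m - j)) (2 * m), (1 + δ k)) * x *
              ((1 + δ (2 * m + 1)) * (1 + δ (2 * (m + 1)))) := by
        intro j hj
        have hidx : n - (m + 1) + (j + 1) = n - m + j := by omega
        have hsub : (m + 1) - (j + 1) = m - j := by omega
        have h1 : 2 * (m + 1) = (2 * m + 1) + 1 := by omega
        have h2 : 2 * (m - j) ≤ 2 * m + 1 + 1 := by omega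
        have h3 : 2 * (m - j) ≤ 2 * m + 1 := by omega
        rw [hidx, hsub, h1, Finset.prod_Icc_succ_top h2,
          Finset.prod_Icc_succ_top h3, ← h1]
        ring
      rw [Finset.sum_congr rfl key]
      have hzero : a (n - (m + 1) + 0) * x ^ 0 *
          ∏ k ∈ Finset.Icc (2 * ((m + 1) - 0)) (2 * (m + 1)), (1 + δ k)
          = a (n - (m + 1)) * (1 + δ (2 * (m + 1))) := by
        simp
      rw [hzero]
      rw [show (∑ j ∈ Finset.range (m + 1),
          (a (n - m + j) * x ^ j *
            ∏ k ∈ Finset.Icc (2 * (m - j)) (2 * m), (1 + δ k)) * x *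
            ((1 + δ (2 * m + 1)) * (1 + δ (2 * (m + 1)))))
        = (∑ j ∈ Finset.range (m + 1),
            a (n - m + j) * x ^ j *
              ∏ k ∈ Finset.Icc (2 * (m - j)) (2 * m), (1 + δ k)) * x *
            ((1 + δ (2 * m + 1)) * (1 + δ (2 * (m + 1)))) from by
          rw [Finset.sum_mul, Finset.sum_mul]]
      ring
  have h := aux n le_rfl
  rw [h]
  refine Finset.sum_congr rfl fun j hj => ?_
  congr 1
  · congr 2
    omega
end

section
/- Let n ≥ 1 be an integer, let u ∈ (0,1), and let c_0, …, c_n be real numbers. On a probability space, let α_0 = 0 and let α_1, …, α_{2n} be mean-independent real random variables with |α_k| ≤ u almost surely for all 1 ≤ k ≤ 2n. Then for every 0 < λ < 1, with probability at least 1 − λ, | Σ_{i=0}^{n} c_i ( ∏_{k=2(n−i)}^{2n} (1 + α_k) − 1 ) | ≤ (Σ_{i=0}^{n} |c_i|) · √(u · γ_{4n}(u)) · √(ln(2/λ)), where γ_m(x) = (1+x)^m − 1. -/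
open MeasureTheory

lemma exp_le_chord {D z : ℝ} (hD : 0 < D) (hz : |z| ≤ D) :
    Real.exp z ≤ Real.cosh D + z * (Real.sinh D / D) := by
  obtain ⟨h1, h2⟩ := abs_le.1 hz
  have ha : (0:ℝ) ≤ (D - z) / (2 * D) := div_nonneg (by linarith) (by linarith)
  have hb : (0:ℝ) ≤ (D + z) / (2 * D) := div_nonneg (by linarith) (by linarith)
  have hab : (D - z) / (2 * D) + (D + z) / (2 * D) = 1 := by field_simp; ring
  have hzeq : (D - z) / (2 * D) * (-D) + (D + z) / (2 * D) * D = z := by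
    field_simp; ring
  have := convexOn_exp.2 (Set.mem_univ (-D)) (Set.mem_univ D) ha hb hab
  simp only [smul_eq_mul] at this
  rw [hzeq] at this
  refine this.trans_eq ?_
  rw [Real.cosh_eq, Real.sinh_eq]
  field_simp
  ring

/-- Integrability from an a.e. bound, on a finite measure space. -/
lemma integrable_of_abs_le {Ω : Type*} {m : MeasurableSpace Ω} {μ : Measure Ω}
    [IsFiniteMeasure μ] {f : Ω → ℝ} {B : ℝ} (hf : AEStronglyMeasurable f μ)
    (hb : ∀ᵐ ω ∂μ, |f ω| ≤ B) : Integrable f μ :=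
  (integrable_const B).mono' hf (by simpa [Real.norm_eq_abs] using hb)

/-- One-step conditional Hoeffding bound. -/
lemma step_bound {Ω : Type*} [m0 : MeasurableSpace Ω] (μ : Measure Ω) [IsProbabilityMeasure μ]
    {G : MeasurableSpace Ω} (hG : G ≤ m0)
    (Y V Z : Ω → ℝ) (hY : StronglyMeasurable[G] Y) (hV : StronglyMeasurable[G] V)
    (hZ : Measurable[m0] Z)
    {BY BV BZ : ℝ} (hYb : ∀ᵐ ω ∂μ, |Y ω| ≤ BY) (hVb : ∀ᵐ ω ∂μ, |V ω| ≤ BV)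
    (hZb : ∀ᵐ ω ∂μ, |Z ω| ≤ BZ)
    {D : ℝ} (hD : 0 < D) (hZVb : ∀ᵐ ω ∂μ, |Z ω * V ω| ≤ D)
    (hcond : μ[Z | G] =ᵐ[μ] 0) :
    ∫ ω, Real.exp (Y ω + Z ω * V ω) ∂μ
      ≤ Real.exp (D ^ 2 / 2) * ∫ ω, Real.exp (Y ω) ∂μ := by
  have hYm : Measurable[m0] Y := (hY.mono hG).measurable
  have hVm : Measurable[m0] V := (hV.mono hG).measurable
  -- the dominating function
  set A : Ω → ℝ := fun ω => Real.cosh D * Real.exp (Y ω)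
      + Real.sinh D / D * (Real.exp (Y ω) * V ω * Z ω) with hA
  have hint_expY : Integrable (fun ω => Real.exp (Y ω)) μ := by
    refine integrable_of_abs_le (B := Real.exp BY) hYm.exp.aestronglyMeasurable ?_
    filter_upwards [hYb] with ω h
    rw [abs_of_pos (Real.exp_pos _)]
    exact Real.exp_le_exp.2 ((le_abs_self _).trans h)
  have hint_FZ : Integrable (fun ω => Real.exp (Y ω) * V ω * Z ω) μ := by
    refine integrable_of_abs_le (B := Real.exp BY * BV * BZ)
      ((hYm.exp.mul hVm).mul hZ).aestronglyMeasurable ?_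
    filter_upwards [hYb, hVb, hZb] with ω h1 h2 h3
    have hBV : 0 ≤ BV := (abs_nonneg _).trans h2
    have hBZ : 0 ≤ BZ := (abs_nonneg _).trans h3
    rw [abs_mul, abs_mul, abs_of_pos (Real.exp_pos _)]
    have he : Real.exp (Y ω) ≤ Real.exp BY :=
      Real.exp_le_exp.2 ((le_abs_self _).trans h1)
    have h0 : (0:ℝ) ≤ Real.exp BY := (Real.exp_pos _).le
    exact mul_le_mul (mul_le_mul he h2 (abs_nonneg _) h0) h3 (abs_nonneg _)
      (by positivity)
  have hint_A : Integrable A μ :=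
    ((hint_expY.const_mul _).add (hint_FZ.const_mul _))
  have hint_L : Integrable (fun ω => Real.exp (Y ω + Z ω * V ω)) μ := by
    refine integrable_of_abs_le (B := Real.exp (BY + D))
      (hYm.add (hZ.mul hVm)).exp.aestronglyMeasurable ?_
    filter_upwards [hYb, hZVb] with ω h1 h2
    rw [abs_of_pos (Real.exp_pos _)]
    refine Real.exp_le_exp.2 (add_le_add ((le_abs_self _).trans h1)
      ((le_abs_self _).trans h2))
  -- pointwise domination
  have hdom : ∀ᵐ ω ∂μ, Real.exp (Y ω + Z ω * V ω) ≤ A ω := by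
    filter_upwards [hZVb] with ω h
    rw [Real.exp_add]
    have := exp_le_chord hD h
    calc Real.exp (Y ω) * Real.exp (Z ω * V ω)
        ≤ Real.exp (Y ω) * (Real.cosh D + Z ω * V ω * (Real.sinh D / D)) :=
          mul_le_mul_of_nonneg_left this (Real.exp_pos _).le
      _ = A ω := by simp only [hA]; ring
  -- the cross term integrates to zero
  have hzero : ∫ ω, Real.exp (Y ω) * V ω * Z ω ∂μ = 0 := by
    have hF : StronglyMeasurable[G] (fun ω => Real.exp (Y ω) * V ω) :=
      (Real.continuous_exp.comp_stronglyMeasurable hY).mul hV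
    have hZint : Integrable Z μ := integrable_of_abs_le hZ.aestronglyMeasurable hZb
    have hmul : (fun ω => Real.exp (Y ω) * V ω * Z ω)
        = (fun ω => Real.exp (Y ω) * V ω) * Z := rfl
    have h1 : μ[(fun ω => Real.exp (Y ω) * V ω) * Z | G]
        =ᵐ[μ] (fun ω => Real.exp (Y ω) * V ω) * μ[Z | G] :=
      condExp_mul_of_stronglyMeasurable_left hF (by rw [← hmul]; exact hint_FZ) hZint
    calc ∫ ω, Real.exp (Y ω) * V ω * Z ω ∂μ
        = ∫ ω, (μ[(fun ω => Real.exp (Y ω) * V ω) * Z | G]) ω ∂μ :=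
          (integral_condExp hG).symm
      _ = ∫ ω, ((fun ω => Real.exp (Y ω) * V ω) * μ[Z | G]) ω ∂μ :=
          integral_congr_ae h1
      _ = ∫ ω, ((fun ω => Real.exp (Y ω) * V ω) ω * (0:Ω → ℝ) ω) ∂μ := by
          refine integral_congr_ae ?_
          filter_upwards [hcond] with ω h
          simp [h]
      _ = 0 := by simp
  calc ∫ ω, Real.exp (Y ω + Z ω * V ω) ∂μ ≤ ∫ ω, A ω ∂μ :=
        integral_mono_ae hint_L hint_A hdom
    _ = Real.cosh D * ∫ ω, Real.exp (Y ω) ∂μ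
        + Real.sinh D / D * ∫ ω, Real.exp (Y ω) * V ω * Z ω ∂μ := by
        rw [hA, integral_add (hint_expY.const_mul _) (hint_FZ.const_mul _),
          integral_const_mul, integral_const_mul]
    _ = Real.cosh D * ∫ ω, Real.exp (Y ω) ∂μ := by rw [hzero]; ring
    _ ≤ Real.exp (D ^ 2 / 2) * ∫ ω, Real.exp (Y ω) ∂μ := by
        refine mul_le_mul_of_nonneg_right (Real.cosh_le_exp_half_sq D)
          (integral_nonneg fun ω => (Real.exp_pos _).le)

noncomputable def hornerW {Ω : Type*} (n : ℕ) (c : ℕ → ℝ) (α : ℕ → Ω → ℝ) (k : ℕ) (ω : Ω) : ℝ :=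
  ∑ i ∈ Finset.range (n+1), c i * ((∏ j ∈ Finset.Icc (2*(n-i)) k, (1 + α j ω)) - 1)

noncomputable def hornerV {Ω : Type*} (n : ℕ) (c : ℕ → ℝ) (α : ℕ → Ω → ℝ) (k : ℕ) (ω : Ω) : ℝ :=
  ∑ i ∈ Finset.range (n+1),
    (if 2*(n-i) ≤ k+1 then c i * ∏ j ∈ Finset.Icc (2*(n-i)) k, (1 + α j ω) else 0)

lemma hornerW_rec {Ω : Type*} (n : ℕ) (c : ℕ → ℝ) (α : ℕ → Ω → ℝ) (k : ℕ) (ω : Ω) :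
    hornerW n c α (k+1) ω = hornerW n c α k ω + α (k+1) ω * hornerV n c α k ω := by
  simp only [hornerW, hornerV, Finset.mul_sum, ← Finset.sum_add_distrib]
  refine Finset.sum_congr rfl fun i _ => ?_
  by_cases h : 2*(n-i) ≤ k+1
  · rw [if_pos h, ← Finset.insert_Icc_right_eq_Icc_add_one h,
      Finset.prod_insert (by simp)]
    ring
  · rw [if_neg h, Finset.Icc_eq_empty h,
      Finset.Icc_eq_empty (fun hh => h (hh.trans (Nat.le_succ k)))]
    simp

lemma hornerW_zero {Ω : Type*} (n : ℕ) (c : ℕ → ℝ) (α : ℕ → Ω → ℝ) (hα0 : α 0 = 0) (ω : Ω) :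
    hornerW n c α 0 ω = 0 := by
  refine Finset.sum_eq_zero fun i hi => ?_
  rcases lt_or_ge i n with h | h
  · rw [Finset.Icc_eq_empty (by omega)]
    simp
  · have hin : i = n := le_antisymm (Nat.lt_succ_iff.1 (Finset.mem_range.1 hi)) h
    subst hin
    simp [hα0]

lemma horner_prod_bound {Ω : Type*} {n : ℕ} {u : ℝ} {α : ℕ → Ω → ℝ} {ω : Ω}
    (hu0 : 0 ≤ u) (hα0 : α 0 = 0)
    (hω : ∀ j ∈ Finset.Icc 1 (2*n), |α j ω| ≤ u) {a k : ℕ} (hk : k ≤ 2*n) :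
    |∏ j ∈ Finset.Icc a k, (1 + α j ω)| ≤ (1+u)^k := by
  rw [Finset.abs_prod]
  have h0 : |1 + α 0 ω| = 1 := by simp [hα0]
  rw [← Finset.prod_erase (Finset.Icc a k) (f := fun j => |1 + α j ω|) (a := 0) h0]
  calc ∏ j ∈ (Finset.Icc a k).erase 0, |1 + α j ω|
      ≤ ∏ _j ∈ (Finset.Icc a k).erase 0, (1+u) := by
        refine Finset.prod_le_prod (fun _ _ => abs_nonneg _) (fun j hj => ?_)
        obtain ⟨hj0, hjI⟩ := Finset.mem_erase.1 hj
        obtain ⟨_, hjk⟩ := Finset.mem_Icc.1 hjI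
        have := hω j (Finset.mem_Icc.2 ⟨Nat.one_le_iff_ne_zero.2 hj0, hjk.trans hk⟩)
        calc |1 + α j ω| ≤ |(1:ℝ)| + |α j ω| := abs_add_le _ _
          _ ≤ 1 + u := by rw [abs_one]; linarith
    _ = (1+u)^((Finset.Icc a k).erase 0).card := by rw [Finset.prod_const]
    _ ≤ (1+u)^k := by
        refine pow_le_pow_right₀ (by linarith) ?_
        calc ((Finset.Icc a k).erase 0).card ≤ (Finset.Icc 1 k).card := by
              refine Finset.card_le_card fun j hj => ?_
              obtain ⟨hj0, hjI⟩ := Finset.mem_erase.1 hj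
              obtain ⟨_, hjk⟩ := Finset.mem_Icc.1 hjI
              exact Finset.mem_Icc.2 ⟨Nat.one_le_iff_ne_zero.2 hj0, hjk⟩
          _ = k := by rw [Nat.card_Icc]; omega

lemma horner_mgf_bound {Ω : Type*} [m0 : MeasurableSpace Ω]
    (μ : Measure Ω) [IsProbabilityMeasure μ]
    (n : ℕ) (u : ℝ) (hu0 : 0 < u)
    (c : ℕ → ℝ) (α : ℕ → Ω → ℝ) (hα0 : α 0 = 0)
    (hmeas : ∀ k, Measurable (α k))
    (hbd : ∀ k ∈ Finset.Icc 1 (2 * n), ∀ᵐ ω ∂μ, |α k ω| ≤ u)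
    (hmi : ∀ k ∈ Finset.Icc 1 (2 * n),
      μ[α k | ⨆ j ∈ Finset.Ico 1 k,
          MeasurableSpace.comap (α j) inferInstance] =ᵐ[μ] 0)
    (hCpos : 0 < ∑ i ∈ Finset.range (n+1), |c i|) (s : ℝ) :
    ∀ k, k ≤ 2*n → ∫ ω, Real.exp (s * hornerW n c α k ω) ∂μ ≤
      Real.exp (s^2 * ((∑ i ∈ Finset.range (n+1), |c i|)^2 * u^2 *
        ∑ j ∈ Finset.range k, (1+u)^(2*j)) / 2) := by
  set C := ∑ i ∈ Finset.range (n+1), |c i| with hCdef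
  rcases eq_or_ne s 0 with rfl | hs
  · intro k _
    simp
  have hgood : ∀ᵐ ω ∂μ, ∀ j ∈ Finset.Icc 1 (2*n), |α j ω| ≤ u :=
    (Filter.eventually_all_finset _).2 hbd
  intro k
  induction k with
  | zero =>
    intro _
    simp [hornerW_zero n c α hα0]
  | succ k ih =>
    intro hk1
    have hk : k ≤ 2*n := by omega
    have hk' : k < 2*n := by omega
    -- the filtration σ-algebra
    set G : MeasurableSpace Ω := ⨆ j ∈ Finset.Ico 1 (k+1),
      MeasurableSpace.comap (α j) inferInstance with hGdef
    have hG : G ≤ m0 := by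
      refine iSup₂_le fun j _ => ?_
      exact (hmeas j).comap_le
    have halpha : ∀ j, j ≤ k → Measurable[G] (α j) := by
      intro j hj
      rcases Nat.eq_zero_or_pos j with rfl | hjpos
      · rw [hα0]; exact measurable_const
      · exact measurable_iff_comap_le.2
          (le_iSup₂ (f := fun j (_ : j ∈ Finset.Ico 1 (k+1)) =>
            MeasurableSpace.comap (α j) inferInstance) j
            (Finset.mem_Ico.2 ⟨hjpos, Nat.lt_succ_of_le hj⟩))
    have hprodmeas : ∀ a : ℕ, Measurable[G] (fun ω => ∏ j ∈ Finset.Icc a k, (1 + α j ω)) := by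
      intro a
      refine Finset.measurable_prod _ fun j hj => ?_
      obtain ⟨_, hjk⟩ := Finset.mem_Icc.1 hj
      exact (measurable_const).add (halpha j hjk)
    have hWsm : StronglyMeasurable[G] (fun ω => s * hornerW n c α k ω) := by
      refine Measurable.stronglyMeasurable ?_
      refine (measurable_const).mul ?_
      refine Finset.measurable_sum _ fun i _ => ?_
      exact (measurable_const).mul ((hprodmeas _).sub measurable_const)
    have hVsm : StronglyMeasurable[G] (fun ω => s * hornerV n c α k ω) := by
      refine Measurable.stronglyMeasurable ?_
      refine (measurable_const).mul ?_
      refine Finset.measurable_sum _ fun i _ => ?_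
      split_ifs
      · exact (measurable_const).mul (hprodmeas _)
      · exact measurable_const
    -- bounds
    have hWb : ∀ᵐ ω ∂μ, |s * hornerW n c α k ω| ≤ |s| * (C * ((1+u)^k + 1)) := by
      filter_upwards [hgood] with ω hω
      rw [abs_mul]
      refine mul_le_mul_of_nonneg_left ?_ (abs_nonneg s)
      calc |hornerW n c α k ω|
          ≤ ∑ i ∈ Finset.range (n+1), |c i * ((∏ j ∈ Finset.Icc (2*(n-i)) k, (1 + α j ω)) - 1)| :=
            Finset.abs_sum_le_sum_abs _ _
        _ ≤ ∑ i ∈ Finset.range (n+1), |c i| * ((1+u)^k + 1) := by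
            refine Finset.sum_le_sum fun i _ => ?_
            rw [abs_mul]
            refine mul_le_mul_of_nonneg_left ?_ (abs_nonneg _)
            calc |(∏ j ∈ Finset.Icc (2*(n-i)) k, (1 + α j ω)) - 1|
                ≤ |∏ j ∈ Finset.Icc (2*(n-i)) k, (1 + α j ω)| + 1 := by
                  refine (abs_sub _ _).trans ?_
                  simp
              _ ≤ (1+u)^k + 1 := by
                  have := horner_prod_bound hu0.le hα0 hω (a := 2*(n-i)) hk
                  linarith
        _ = C * ((1+u)^k + 1) := by rw [← Finset.sum_mul]
    have hVb : ∀ᵐ ω ∂μ, |s * hornerV n c α k ω| ≤ |s| * (C * (1+u)^k) := by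
      filter_upwards [hgood] with ω hω
      rw [abs_mul]
      refine mul_le_mul_of_nonneg_left ?_ (abs_nonneg s)
      calc |hornerV n c α k ω|
          ≤ ∑ i ∈ Finset.range (n+1),
              |if 2*(n-i) ≤ k+1 then c i * ∏ j ∈ Finset.Icc (2*(n-i)) k, (1 + α j ω) else 0| :=
            Finset.abs_sum_le_sum_abs _ _
        _ ≤ ∑ i ∈ Finset.range (n+1), |c i| * (1+u)^k := by
            refine Finset.sum_le_sum fun i _ => ?_
            split_ifs
            · rw [abs_mul]
              exact mul_le_mul_of_nonneg_left
                (horner_prod_bound hu0.le hα0 hω hk) (abs_nonneg _)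
            · have h1 : (0:ℝ) ≤ |c i| := abs_nonneg _
              have h2 : (0:ℝ) ≤ (1+u)^k := by positivity
              simp only [abs_zero]
              positivity
        _ = C * (1+u)^k := by rw [← Finset.sum_mul]
    have hZb : ∀ᵐ ω ∂μ, |α (k+1) ω| ≤ u :=
      hbd (k+1) (Finset.mem_Icc.2 ⟨Nat.le_add_left 1 k, by omega⟩)
    have hZVb : ∀ᵐ ω ∂μ, |α (k+1) ω * (s * hornerV n c α k ω)| ≤ |s| * (C * u * (1+u)^k) := by
      filter_upwards [hVb, hZb] with ω h1 h2
      rw [abs_mul]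
      calc |α (k+1) ω| * |s * hornerV n c α k ω|
          ≤ u * (|s| * (C * (1+u)^k)) := by
            refine mul_le_mul h2 h1 (abs_nonneg _) hu0.le
        _ = |s| * (C * u * (1+u)^k) := by ring
    have hD : 0 < |s| * (C * u * (1+u)^k) := by
      refine mul_pos (abs_pos.2 hs) ?_
      positivity
    have hcond : μ[α (k+1) | G] =ᵐ[μ] 0 :=
      hmi (k+1) (Finset.mem_Icc.2 ⟨Nat.le_add_left 1 k, by omega⟩)
    have hstep := step_bound (m0 := m0) μ hG
      (fun ω => s * hornerW n c α k ω) (fun ω => s * hornerV n c α k ω) (α (k+1))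
      hWsm hVsm (hmeas (k+1)) hWb hVb hZb hD hZVb hcond
    have hfun : ∀ ω, s * hornerW n c α (k+1) ω
        = s * hornerW n c α k ω + α (k+1) ω * (s * hornerV n c α k ω) := by
      intro ω
      rw [hornerW_rec]
      ring
    calc ∫ ω, Real.exp (s * hornerW n c α (k+1) ω) ∂μ
        = ∫ ω, Real.exp (s * hornerW n c α k ω + α (k+1) ω * (s * hornerV n c α k ω)) ∂μ := by
          refine integral_congr_ae (Filter.Eventually.of_forall fun ω => ?_)
          exact congrArg Real.exp (hfun ω)
      _ ≤ Real.exp ((|s| * (C * u * (1+u)^k))^2 / 2) * ∫ ω, Real.exp (s * hornerW n c α k ω) ∂μ :=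
          hstep
      _ ≤ Real.exp ((|s| * (C * u * (1+u)^k))^2 / 2) *
            Real.exp (s^2 * (C^2 * u^2 * ∑ j ∈ Finset.range k, (1+u)^(2*j)) / 2) :=
          mul_le_mul_of_nonneg_left (ih hk) (Real.exp_pos _).le
      _ = Real.exp (s^2 * (C^2 * u^2 * ∑ j ∈ Finset.range (k+1), (1+u)^(2*j)) / 2) := by
          rw [← Real.exp_add, Finset.sum_range_succ]
          congr 1
          have hPP : (1+u)^(2*k) = ((1+u)^k)^2 := by rw [← pow_mul, mul_comm]
          rw [hPP, mul_pow, sq_abs]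
          ring

/-- Martingale concentration bound for the weighted nested products arising in
Horner's algorithm under stochastic rounding: the `α_k` are mean independent
(each has zero conditional expectation given the previous ones) and bounded by
`u` almost surely. -/
theorem horner_martingale_bound {Ω : Type*} [MeasurableSpace Ω]
    (μ : Measure Ω) [IsProbabilityMeasure μ]
    (n : ℕ) (hn : 1 ≤ n) (u : ℝ) (hu0 : 0 < u) (hu1 : u < 1)
    (c : ℕ → ℝ) (α : ℕ → Ω → ℝ) (hα0 : α 0 = 0)
    (hmeas : ∀ k, Measurable (α k))
    (hbd : ∀ k ∈ Finset.Icc 1 (2 * n), ∀ᵐ ω ∂μ, |α k ω| ≤ u)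
    (hmi : ∀ k ∈ Finset.Icc 1 (2 * n),
      μ[α k | ⨆ j ∈ Finset.Ico 1 k,
          MeasurableSpace.comap (α j) inferInstance] =ᵐ[μ] 0)
    (lam : ℝ) (hlam0 : 0 < lam) (hlam1 : lam < 1) :
    ENNReal.ofReal (1 - lam) ≤
      μ {ω | |∑ i ∈ Finset.range (n + 1),
          c i * ((∏ k ∈ Finset.Icc (2 * (n - i)) (2 * n), (1 + α k ω)) - 1)| ≤
        (∑ i ∈ Finset.range (n + 1), |c i|) *
          (Real.sqrt (u * gammaFn (4 * n) u) * Real.sqrt (Real.log (2 / lam)))} := by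

  by_cases hC0 : (∑ i ∈ Finset.range (n+1), |c i|) = 0
  · -- trivial case: all coefficients vanish
    have hc0 : ∀ i ∈ Finset.range (n+1), c i = 0 := fun i hi =>
      abs_eq_zero.1 ((Finset.sum_eq_zero_iff_of_nonneg (fun j _ => abs_nonneg (c j))).1 hC0 i hi)
    have hset : {ω : Ω | |∑ i ∈ Finset.range (n + 1),
          c i * ((∏ k ∈ Finset.Icc (2 * (n - i)) (2 * n), (1 + α k ω)) - 1)| ≤
        (∑ i ∈ Finset.range (n + 1), |c i|) *
          (Real.sqrt (u * gammaFn (4 * n) u) * Real.sqrt (Real.log (2 / lam)))} = Set.univ := by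
      refine Set.eq_univ_of_forall fun ω => ?_
      simp only [Set.mem_setOf_eq]
      rw [Finset.sum_eq_zero (fun i hi => by rw [hc0 i hi]; ring), hC0]
      simp
    rw [hset, measure_univ]
    exact ENNReal.ofReal_le_one.2 (by linarith)
  have hCpos : 0 < ∑ i ∈ Finset.range (n+1), |c i| :=
    lt_of_le_of_ne (Finset.sum_nonneg fun i _ => abs_nonneg _) (Ne.symm hC0)
  set C := ∑ i ∈ Finset.range (n+1), |c i| with hCdef
  set γ := gammaFn (4*n) u with hγdef
  set L := Real.log (2/lam) with hLdef
  set Y : Ω → ℝ := hornerW n c α (2*n) with hYdef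
  -- basic positivity facts
  have hγpos : 0 < γ := by
    rw [hγdef]
    simp only [gammaFn]
    have h1 : (1:ℝ) < (1+u)^(4*n) := one_lt_pow₀ (by linarith) (by omega)
    linarith
  have hL : 0 < L := Real.log_pos (by rw [lt_div_iff₀ hlam0]; linarith)
  set v := C^2 * u * γ with hvdef
  have hv : 0 < v := by positivity
  -- geometric sum identity
  have hsum : (u^2 + 2*u) * ∑ j ∈ Finset.range (2*n), (1+u)^(2*j) = γ := by
    have h1 : ∀ j, ((1:ℝ)+u)^(2*j) = ((1+u)^2)^j := fun j => pow_mul _ _ _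
    simp_rw [h1]
    have h2 := geom_sum_mul ((1+u)^2) (2*n)
    have h3 : ((1+u)^2)^(2*n) = (1+u)^(4*n) := by
      rw [← pow_mul]
      congr 1
      ring
    rw [hγdef]
    simp only [gammaFn]
    rw [← h3]
    nlinarith [h2]
  have hSig : 0 ≤ ∑ j ∈ Finset.range (2*n), (1+u)^(2*j) :=
    Finset.sum_nonneg fun j _ => by positivity
  -- mgf bound
  have hmgf : ∀ s : ℝ, ∫ ω, Real.exp (s * Y ω) ∂μ ≤ Real.exp (s^2 * v / 4) := by
    intro s
    refine (horner_mgf_bound μ n u hu0 c α hα0 hmeas hbd hmi hCpos s (2*n) le_rfl).trans ?_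
    refine Real.exp_le_exp.2 ?_
    have hdiff : s^2 * v / 4 - s^2 * (C^2 * u^2 * ∑ j ∈ Finset.range (2*n), (1+u)^(2*j)) / 2
        = s^2 * C^2 * u^3 * (∑ j ∈ Finset.range (2*n), (1+u)^(2*j)) / 4 := by
      rw [hvdef, ← hsum]
      ring
    nlinarith [mul_nonneg (mul_nonneg (mul_nonneg (sq_nonneg s) (sq_nonneg C))
      (pow_nonneg hu0.le 3)) hSig]
  -- measurability and integrability
  have hYmeas : Measurable Y := by
    rw [hYdef]
    refine Finset.measurable_sum _ fun i _ => ?_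
    exact measurable_const.mul
      ((Finset.measurable_prod _ fun j _ => measurable_const.add (hmeas j)).sub measurable_const)
  have hgood : ∀ᵐ ω ∂μ, ∀ j ∈ Finset.Icc 1 (2*n), |α j ω| ≤ u :=
    (Filter.eventually_all_finset _).2 hbd
  have hYb : ∀ᵐ ω ∂μ, |Y ω| ≤ C * ((1+u)^(2*n) + 1) := by
    filter_upwards [hgood] with ω hω
    calc |Y ω| ≤ ∑ i ∈ Finset.range (n+1),
          |c i * ((∏ j ∈ Finset.Icc (2*(n-i)) (2*n), (1 + α j ω)) - 1)| :=
        Finset.abs_sum_le_sum_abs _ _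
      _ ≤ ∑ i ∈ Finset.range (n+1), |c i| * ((1+u)^(2*n) + 1) := by
          refine Finset.sum_le_sum fun i _ => ?_
          rw [abs_mul]
          refine mul_le_mul_of_nonneg_left ?_ (abs_nonneg _)
          calc |(∏ j ∈ Finset.Icc (2*(n-i)) (2*n), (1 + α j ω)) - 1|
              ≤ |∏ j ∈ Finset.Icc (2*(n-i)) (2*n), (1 + α j ω)| + 1 := by
                refine (abs_sub _ _).trans ?_
                simp
            _ ≤ (1+u)^(2*n) + 1 := by
                have := horner_prod_bound hu0.le hα0 hω (a := 2*(n-i)) (le_refl (2*n))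
                linarith
      _ = C * ((1+u)^(2*n) + 1) := by rw [← Finset.sum_mul]
  have hint : ∀ s : ℝ, Integrable (fun ω => Real.exp (s * Y ω)) μ := by
    intro s
    refine integrable_of_abs_le (B := Real.exp (|s| * (C * ((1+u)^(2*n) + 1))))
      ((measurable_const.mul hYmeas).exp.aestronglyMeasurable) ?_
    filter_upwards [hYb] with ω h
    rw [abs_of_pos (Real.exp_pos _)]
    refine Real.exp_le_exp.2 ?_
    calc s * Y ω ≤ |s * Y ω| := le_abs_self _
      _ = |s| * |Y ω| := abs_mul _ _
      _ ≤ |s| * (C * ((1+u)^(2*n) + 1)) := mul_le_mul_of_nonneg_left h (abs_nonneg _)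
  -- Chernoff bound, both tails
  set t := C * (Real.sqrt (u*γ) * Real.sqrt L) with htdef
  have huγ : 0 < u * γ := mul_pos hu0 hγpos
  have htpos : 0 < t := by positivity
  have ht2 : t^2 = v * L := by
    rw [htdef, mul_pow, mul_pow, Real.sq_sqrt huγ.le, Real.sq_sqrt hL.le, hvdef]
    ring
  set s0 := 2*t/v with hs0def
  have hs0 : 0 ≤ s0 := by positivity
  have hexpL : -s0 * t + s0^2 * v / 4 = -L := by
    rw [hs0def]
    have h1 : -(2*t/v) * t + (2*t/v)^2 * v / 4 = -(t^2)/v := by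
      field_simp
      ring
    rw [h1, ht2, neg_div, mul_comm, mul_div_assoc, div_self hv.ne', mul_one]
  have hexpLam : Real.exp (-L) = lam / 2 := by
    rw [hLdef, ← Real.log_inv, inv_div, Real.exp_log (by linarith : (0:ℝ) < lam/2)]
  have hup : (μ {ω | t ≤ Y ω}).toReal ≤ lam / 2 := by
    refine (ProbabilityTheory.measure_ge_le_exp_mul_mgf (μ := μ) (X := Y) t hs0 (hint s0)).trans ?_
    have h2 : ProbabilityTheory.mgf Y μ s0 = ∫ ω, Real.exp (s0 * Y ω) ∂μ := rfl
    calc Real.exp (-s0*t) * ProbabilityTheory.mgf Y μ s0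
        ≤ Real.exp (-s0*t) * Real.exp (s0^2 * v / 4) := by
          rw [h2]
          exact mul_le_mul_of_nonneg_left (hmgf s0) (Real.exp_pos _).le
      _ = Real.exp (-s0*t + s0^2 * v / 4) := (Real.exp_add _ _).symm
      _ = lam / 2 := by rw [hexpL, hexpLam]
  have hlo : (μ {ω | t ≤ -Y ω}).toReal ≤ lam / 2 := by
    have hint' : Integrable (fun ω => Real.exp (s0 * (-Y ω))) μ := by
      have heq : (fun ω => Real.exp (s0 * (-Y ω))) = fun ω => Real.exp ((-s0) * Y ω) := by
        funext ω; ring_nf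
      rw [heq]
      exact hint (-s0)
    refine (ProbabilityTheory.measure_ge_le_exp_mul_mgf (μ := μ) (X := fun ω => -Y ω) t hs0
      hint').trans ?_
    have h2 : ProbabilityTheory.mgf (fun ω => -Y ω) μ s0 = ∫ ω, Real.exp ((-s0) * Y ω) ∂μ := by
      refine integral_congr_ae (Filter.Eventually.of_forall fun ω => ?_)
      simp only
      ring_nf
    calc Real.exp (-s0*t) * ProbabilityTheory.mgf (fun ω => -Y ω) μ s0
        ≤ Real.exp (-s0*t) * Real.exp ((-s0)^2 * v / 4) := by
          rw [h2]
          exact mul_le_mul_of_nonneg_left (hmgf (-s0)) (Real.exp_pos _).le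
      _ = Real.exp (-s0*t + s0^2 * v / 4) := by
          rw [← Real.exp_add, neg_pow]
          norm_num
      _ = lam / 2 := by rw [hexpL, hexpLam]
  -- assemble
  have hgoal : ENNReal.ofReal (1 - lam) ≤ μ {ω | |Y ω| ≤ t} := by
    set S := {ω | |Y ω| ≤ t} with hSdef
    have hSmeas : MeasurableSet S := measurableSet_le (continuous_abs.measurable.comp hYmeas) measurable_const
    have hsub : Sᶜ ⊆ {ω | t ≤ Y ω} ∪ {ω | t ≤ -Y ω} := by
      intro ω hω
      simp only [hSdef, Set.mem_compl_iff, Set.mem_setOf_eq, not_le] at hω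
      rcases lt_abs.1 hω with h | h
      · exact Or.inl h.le
      · exact Or.inr h.le
    have hA : MeasurableSet {ω | t ≤ Y ω} := measurableSet_le measurable_const hYmeas
    have hcompl : (μ Sᶜ).toReal ≤ lam := by
      have h1 : μ Sᶜ ≤ μ {ω | t ≤ Y ω} + μ {ω | t ≤ -Y ω} :=
        (measure_mono hsub).trans (measure_union_le _ _)
      have h2 : (μ Sᶜ).toReal ≤ (μ {ω | t ≤ Y ω} + μ {ω | t ≤ -Y ω}).toReal :=
        ENNReal.toReal_mono
          (ENNReal.add_ne_top.2 ⟨measure_ne_top _ _, measure_ne_top _ _⟩) h1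
      rw [ENNReal.toReal_add (measure_ne_top _ _) (measure_ne_top _ _)] at h2
      linarith
    have hS' : μ Sᶜ ≤ ENNReal.ofReal lam :=
      (ENNReal.le_ofReal_iff_toReal_le (measure_ne_top _ _) hlam0.le).2 hcompl
    have hSeq : μ S = 1 - μ Sᶜ := by
      have := prob_compl_eq_one_sub (μ := μ) hSmeas.compl
      rwa [compl_compl] at this
    rw [hSeq]
    calc ENNReal.ofReal (1 - lam) = 1 - ENNReal.ofReal lam := by
          rw [ENNReal.ofReal_sub _ hlam0.le, ENNReal.ofReal_one]
      _ ≤ 1 - μ Sᶜ := tsub_le_tsub_left hS' 1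
  exact hgoal
end

section
/- Let h ≥ 1 be an integer, let u ∈ (0,1), and let a_1, …, a_{2^h} be real numbers. On a probability space, for each level j = 1, …, h and each index i = 1, …, 2^(h−j), let α^j_i be real random variables with |α^j_i| ≤ u almost surely, which are mean independent when enumerated in the order of increasing level j (and increasing i within each level). Then for every 0 < λ < 1, with probability at least 1 − λ, | Σ_{i=1}^{2^h} a_i ( ∏_{j=1}^{h} (1 + α^j_{⌈i/2^j⌉}) − 1 ) | ≤ (Σ_{i=1}^{2^h} |a_i|) · √(u · γ_{2h}(u)) · √(ln(2/λ)), where γ_m(x) = (1+x)^m − 1. -/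
open MeasureTheory
open Real

section Helpers

variable {Ω : Type*} {m0 : MeasurableSpace Ω} {μ : Measure Ω}

/-- bounded measurable functions are integrable on a finite measure space -/
lemma integrable_of_ae_bound [IsFiniteMeasure μ] {f : Ω → ℝ} (hf : Measurable f)
    {C : ℝ} (hC : ∀ᵐ ω ∂μ, |f ω| ≤ C) : Integrable f μ :=
  Integrable.mono' (integrable_const C) hf.aestronglyMeasurable
    (by filter_upwards [hC] with ω hω using by simpa [Real.norm_eq_abs] using hω)

/-- convexity bound: for `|x| ≤ u`, `exp (x*y) ≤ cosh (u*y) + (x/u) * sinh (u*y)`. -/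
lemma exp_mul_le_cosh_add (u x y : ℝ) (hu : 0 < u) (hx : |x| ≤ u) :
    Real.exp (x * y) ≤ Real.cosh (u * y) + (x / u) * Real.sinh (u * y) := by
  have hx1 : -u ≤ x := (abs_le.mp hx).1
  have hx2 : x ≤ u := (abs_le.mp hx).2
  have hθ1 : 0 ≤ (u + x) / (2 * u) := div_nonneg (by linarith) (by linarith)
  have hθ2 : 0 ≤ (u - x) / (2 * u) := div_nonneg (by linarith) (by linarith)
  have hθ3 : (u - x) / (2 * u) + (u + x) / (2 * u) = 1 := by field_simp; ring
  have hconv := convexOn_exp.2 (Set.mem_univ (-(u * y))) (Set.mem_univ (u * y)) hθ2 hθ1 hθ3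
  have hxy : x * y = ((u - x) / (2 * u)) • (-(u * y)) + ((u + x) / (2 * u)) • (u * y) := by
    simp only [smul_eq_mul]; field_simp [hu.ne']; ring
  rw [hxy]
  refine hconv.trans_eq ?_
  rw [Real.cosh_eq, Real.sinh_eq]
  simp only [smul_eq_mul]; field_simp [hu.ne']
  ring

end Helpers

section Step

variable {Ω : Type*} {m0 : MeasurableSpace Ω} {μ : Measure Ω}

lemma step_bound_s7 [IsProbabilityMeasure μ] {F : MeasurableSpace Ω} (hF : F ≤ m0)
    {Z X Y : Ω → ℝ} {u c CZ : ℝ} (hu : 0 < u) (hc : 0 ≤ c)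
    (hZm : Measurable[F] Z) (hZ0 : ∀ ω, 0 ≤ Z ω) (hZbd : ∀ᵐ ω ∂μ, Z ω ≤ CZ)
    (hXm : Measurable[m0] X) (hXbd : ∀ᵐ ω ∂μ, |X ω| ≤ u)
    (hYm : Measurable[F] Y) (hYbd : ∀ᵐ ω ∂μ, |Y ω| ≤ c)
    (hcond : μ[X | F] =ᵐ[μ] 0) :
    ∫ ω, Z ω * Real.exp (X ω * Y ω) ∂μ ≤ Real.exp (u^2 * c^2 / 2) * ∫ ω, Z ω ∂μ := by
  have hZma : Measurable[m0] Z := hZm.mono hF le_rfl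
  have hYma : Measurable[m0] Y := hYm.mono hF le_rfl
  haveI : (MeasureTheory.ae μ).NeBot := ae_neBot.2 (IsProbabilityMeasure.ne_zero μ)
  haveI : Nonempty Ω := Filter.nonempty_of_neBot (MeasureTheory.ae μ)
  have hCZ0 : 0 ≤ CZ := by
    obtain ⟨ω, hω⟩ := hZbd.exists
    exact (hZ0 ω).trans hω
  set G : Ω → ℝ := fun ω => Z ω * Real.sinh (u * Y ω) with hGdef
  have hGm : Measurable[F] G := hZm.mul (Real.measurable_sinh.comp (hYm.const_mul u))
  have hGma : Measurable[m0] G := hGm.mono hF le_rfl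
  have hGbd : ∀ᵐ ω ∂μ, |G ω| ≤ CZ * Real.sinh (u * c) := by
    filter_upwards [hYbd, hZbd] with ω hY hZω
    have h1 : |Real.sinh (u * Y ω)| = Real.sinh |u * Y ω| := Real.abs_sinh _
    have h2 : |u * Y ω| ≤ u * c := by
      rw [abs_mul, abs_of_pos hu]
      exact mul_le_mul_of_nonneg_left hY hu.le
    have h3 : Real.sinh |u * Y ω| ≤ Real.sinh (u * c) := Real.sinh_le_sinh.mpr h2
    calc |G ω| = |Z ω| * |Real.sinh (u * Y ω)| := abs_mul _ _
      _ ≤ CZ * Real.sinh (u * c) := by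
          rw [h1]
          have hsnn : 0 ≤ Real.sinh |u * Y ω| := by
            rw [← Real.sinh_zero]
            exact Real.sinh_le_sinh.mpr (abs_nonneg _)
          exact mul_le_mul (by rw [abs_of_nonneg (hZ0 ω)]; exact hZω) h3 hsnn hCZ0
  have hXint : Integrable X μ := integrable_of_ae_bound hXm hXbd
  have hGXint : Integrable (fun ω => G ω * X ω) μ := by
    refine integrable_of_ae_bound (hGma.mul hXm) (C := (CZ * Real.sinh (u * c)) * u) ?_
    filter_upwards [hGbd, hXbd] with ω h1 h2
    calc |G ω * X ω| = |G ω| * |X ω| := abs_mul _ _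
      _ ≤ (CZ * Real.sinh (u * c)) * u :=
          mul_le_mul h1 h2 (abs_nonneg _) ((abs_nonneg _).trans h1)
  haveI : SigmaFinite (μ.trim hF) := by
    have : IsFiniteMeasure (μ.trim hF) := isFiniteMeasure_trim hF
    infer_instance
  have hzero : ∫ ω, G ω * X ω ∂μ = 0 := by
    have hpull : μ[G * X | F] =ᵐ[μ] G * μ[X | F] := by
      refine condExp_stronglyMeasurable_mul_of_bound hF hGm.stronglyMeasurable hXint
        (CZ * Real.sinh (u * c)) ?_
      filter_upwards [hGbd] with ω hω using by simpa [Real.norm_eq_abs] using hω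
    have h1 : ∫ ω, (G * X) ω ∂μ = ∫ ω, (μ[G * X | F]) ω ∂μ := (integral_condExp hF).symm
    have h2 : ∫ ω, (μ[G * X | F]) ω ∂μ = 0 := by
      rw [integral_congr_ae (hpull.trans ?_), integral_zero]
      filter_upwards [hcond] with ω hω
      simp [Pi.mul_apply, hω]
    simpa [Pi.mul_apply] using h1.trans h2
  have hpt : ∀ᵐ ω ∂μ, Z ω * Real.exp (X ω * Y ω) ≤
      Z ω * Real.cosh (u * Y ω) + (G ω * X ω) / u := by
    filter_upwards [hXbd] with ω hX
    have := exp_mul_le_cosh_add u (X ω) (Y ω) hu hX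
    have h2 := mul_le_mul_of_nonneg_left this (hZ0 ω)
    calc Z ω * Real.exp (X ω * Y ω)
        ≤ Z ω * (Real.cosh (u * Y ω) + X ω / u * Real.sinh (u * Y ω)) := h2
      _ = Z ω * Real.cosh (u * Y ω) + (G ω * X ω) / u := by rw [hGdef]; ring
  have hLint : Integrable (fun ω => Z ω * Real.exp (X ω * Y ω)) μ := by
    refine integrable_of_ae_bound (hZma.mul (Real.measurable_exp.comp (hXm.mul hYma)))
      (C := CZ * Real.exp (u * c)) ?_
    filter_upwards [hXbd, hYbd, hZbd] with ω h1 h2 hZω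
    rw [abs_mul, abs_of_nonneg (hZ0 ω), abs_of_pos (Real.exp_pos _)]
    refine mul_le_mul hZω (Real.exp_le_exp.mpr ?_) (Real.exp_pos _).le hCZ0
    calc X ω * Y ω ≤ |X ω * Y ω| := le_abs_self _
      _ = |X ω| * |Y ω| := abs_mul _ _
      _ ≤ u * c := mul_le_mul h1 h2 (abs_nonneg _) hu.le
  have hcoshint : Integrable (fun ω => Z ω * Real.cosh (u * Y ω)) μ := by
    refine integrable_of_ae_bound (hZma.mul (Real.measurable_cosh.comp (hYma.const_mul u)))
      (C := CZ * Real.cosh (u * c)) ?_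
    filter_upwards [hYbd, hZbd] with ω h2 hZω
    rw [abs_mul, abs_of_nonneg (hZ0 ω), abs_of_pos (Real.cosh_pos _)]
    refine mul_le_mul hZω (Real.cosh_le_cosh.mpr ?_) (Real.cosh_pos _).le hCZ0
    rw [abs_mul, abs_mul, abs_of_pos hu, abs_of_nonneg hc]
    exact mul_le_mul_of_nonneg_left h2 hu.le
  have hZint : Integrable Z μ := integrable_of_ae_bound hZma
    (by filter_upwards [hZbd] with ω hZω; rw [abs_of_nonneg (hZ0 ω)]; exact hZω)
  have step1 : ∫ ω, Z ω * Real.exp (X ω * Y ω) ∂μ ≤ ∫ ω, Z ω * Real.cosh (u * Y ω) ∂μ := by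
    have hle : ∫ ω, Z ω * Real.exp (X ω * Y ω) ∂μ ≤
        ∫ ω, (Z ω * Real.cosh (u * Y ω) + (G ω * X ω) / u) ∂μ :=
      integral_mono_ae hLint (by exact hcoshint.add (hGXint.div_const u)) hpt
    have heq : ∫ ω, (Z ω * Real.cosh (u * Y ω) + (G ω * X ω) / u) ∂μ
        = ∫ ω, Z ω * Real.cosh (u * Y ω) ∂μ + (∫ ω, G ω * X ω ∂μ) / u := by
      have h1 := integral_add hcoshint (hGXint.div_const u)
      rw [integral_div] at h1
      exact h1
    rw [heq, hzero] at hle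
    simpa using hle
  have step2 : ∫ ω, Z ω * Real.cosh (u * Y ω) ∂μ ≤ Real.exp (u^2 * c^2 / 2) * ∫ ω, Z ω ∂μ := by
    rw [← integral_const_mul]
    refine integral_mono_ae hcoshint (hZint.const_mul _) ?_
    filter_upwards [hYbd] with ω h2
    rw [mul_comm (Real.exp _) (Z ω)]
    refine mul_le_mul_of_nonneg_left ?_ (hZ0 ω)
    calc Real.cosh (u * Y ω) ≤ Real.exp ((u * Y ω)^2 / 2) := Real.cosh_le_exp_half_sq _
      _ ≤ Real.exp (u^2 * c^2 / 2) := by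
          refine Real.exp_le_exp.mpr (div_le_div_of_nonneg_right ?_ two_pos.le)
          have : |Y ω| ^ 2 ≤ c ^ 2 := pow_le_pow_left₀ (abs_nonneg _) h2 2
          calc (u * Y ω)^2 = u^2 * |Y ω|^2 := by rw [mul_pow, sq_abs]
            _ ≤ u^2 * c^2 := mul_le_mul_of_nonneg_left this (sq_nonneg u)
  exact step1.trans step2


lemma mgf_bound [IsProbabilityMeasure μ] {ι : Type*} [LinearOrder ι]
    {u : ℝ} (hu : 0 < u)
    (X W : ι → Ω → ℝ) (b : ι → ℝ) (hb : ∀ p, 0 ≤ b p) (𝒢 : ι → MeasurableSpace Ω)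
    (h𝒢 : ∀ p, 𝒢 p ≤ m0)
    (hXm : ∀ p, Measurable[m0] (X p))
    (hX𝒢 : ∀ p q, p < q → Measurable[𝒢 q] (X p))
    (hW𝒢 : ∀ p q, p ≤ q → Measurable[𝒢 q] (W p))
    (hXbd : ∀ p, ∀ᵐ ω ∂μ, |X p ω| ≤ u)
    (hWbd : ∀ p, ∀ᵐ ω ∂μ, |W p ω| ≤ b p)
    (hcond : ∀ p, μ[X p | 𝒢 p] =ᵐ[μ] 0)
    (s : Finset ι) :
    ∫ ω, Real.exp (∑ p ∈ s, X p ω * W p ω) ∂μ ≤ Real.exp (∑ p ∈ s, u^2 * b p^2 / 2) := by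
  classical
  induction s using Finset.induction_on_max with
  | empty => simp
  | insert q t hqmax ih =>
    have hqt : q ∉ t := fun hq => lt_irrefl q (hqmax q hq)
    rw [Finset.sum_insert hqt]
    have key : ∫ ω, Real.exp ((∑ p ∈ t, X p ω * W p ω) + X q ω * W q ω) ∂μ ≤
        Real.exp (u^2 * (b q)^2 / 2) * ∫ ω, Real.exp (∑ p ∈ t, X p ω * W p ω) ∂μ := by
      simp_rw [Real.exp_add]
      refine step_bound_s7 (h𝒢 q) hu (hb q)
        (Z := fun ω => Real.exp (∑ p ∈ t, X p ω * W p ω))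
        (CZ := Real.exp (∑ p ∈ t, u * b p)) ?_ (fun ω => (Real.exp_pos _).le) ?_
        (hXm q) (hXbd q) (hW𝒢 q q le_rfl) (hWbd q) (hcond q)
      · exact Real.measurable_exp.comp <| Finset.measurable_sum _ fun p hp =>
          ((hX𝒢 p q (hqmax p hp)).mul (hW𝒢 p q (hqmax p hp).le))
      · have h1 : ∀ᵐ ω ∂μ, ∀ p ∈ t, |X p ω| ≤ u :=
          (ae_ball_iff t.countable_toSet).mpr fun p _ => hXbd p
        have h2 : ∀ᵐ ω ∂μ, ∀ p ∈ t, |W p ω| ≤ b p :=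
          (ae_ball_iff t.countable_toSet).mpr fun p _ => hWbd p
        filter_upwards [h1, h2] with ω h1 h2
        refine Real.exp_le_exp.mpr (Finset.sum_le_sum fun p hp => ?_)
        calc X p ω * W p ω ≤ |X p ω * W p ω| := le_abs_self _
          _ = |X p ω| * |W p ω| := abs_mul _ _
          _ ≤ u * b p := mul_le_mul (h1 p hp) (h2 p hp) (abs_nonneg _) hu.le
    calc ∫ ω, Real.exp (∑ p ∈ insert q t, X p ω * W p ω) ∂μ
        = ∫ ω, Real.exp ((∑ p ∈ t, X p ω * W p ω) + X q ω * W q ω) ∂μ := by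
          congr 1; funext ω; rw [Finset.sum_insert hqt]; ring_nf
      _ ≤ Real.exp (u^2 * (b q)^2 / 2) * ∫ ω, Real.exp (∑ p ∈ t, X p ω * W p ω) ∂μ := key
      _ ≤ Real.exp (u^2 * (b q)^2 / 2) * Real.exp (∑ p ∈ t, u^2 * b p^2 / 2) :=
          mul_le_mul_of_nonneg_left ih (Real.exp_pos _).le
      _ = Real.exp (u^2 * b q^2 / 2 + ∑ p ∈ t, u^2 * b p^2 / 2) := (Real.exp_add _ _).symm


lemma chernoff [IsProbabilityMeasure μ] {S : Ω → ℝ} (hSm : Measurable[m0] S) {C s V : ℝ}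
    (hs : 0 < s) (hV : 0 < V) (hbdd : ∀ᵐ ω ∂μ, |S ω| ≤ C)
    (hmgf : ∫ ω, Real.exp ((s/V) * S ω) ∂μ ≤ Real.exp ((s/V)^2 * V / 2)) :
    (μ {ω | s ≤ S ω}).toReal ≤ Real.exp (-(s^2) / (2*V)) := by
  set t : ℝ := s / V with ht
  have htpos : 0 < t := div_pos hs hV
  have hint : Integrable (fun ω => Real.exp (t * S ω)) μ := by
    refine integrable_of_ae_bound (Real.measurable_exp.comp (hSm.const_mul t))
      (C := Real.exp (t * C)) ?_
    filter_upwards [hbdd] with ω hω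
    rw [abs_of_pos (Real.exp_pos _)]
    refine Real.exp_le_exp.mpr ?_
    calc t * S ω ≤ t * |S ω| := mul_le_mul_of_nonneg_left (le_abs_self _) htpos.le
      _ ≤ t * C := mul_le_mul_of_nonneg_left hω htpos.le
  have hmarkov := mul_meas_ge_le_integral_of_nonneg
    (f := fun ω => Real.exp (t * S ω)) (μ := μ)
    (.of_forall fun ω => (Real.exp_pos _).le) hint (Real.exp (t * s))
  have hsub : {ω | s ≤ S ω} ⊆ {ω | Real.exp (t * s) ≤ Real.exp (t * S ω)} :=
    fun ω hω => Real.exp_le_exp.mpr (mul_le_mul_of_nonneg_left hω htpos.le)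
  have hmono : (μ {ω | s ≤ S ω}).toReal ≤
      (μ {ω | Real.exp (t * s) ≤ Real.exp (t * S ω)}).toReal :=
    ENNReal.toReal_mono (measure_ne_top _ _) (measure_mono hsub)
  have h2 : (μ {ω | Real.exp (t * s) ≤ Real.exp (t * S ω)}).toReal ≤
      Real.exp (t^2 * V / 2) / Real.exp (t * s) := by
    rw [le_div_iff₀ (Real.exp_pos _), mul_comm]
    exact hmarkov.trans hmgf
  refine (hmono.trans h2).trans_eq ?_
  rw [← Real.exp_sub]
  congr 1
  have hV' : V ≠ 0 := hV.ne'
  rw [ht]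
  field_simp
  ring

end Step

lemma icc_succ_insert (n : ℕ) : Finset.Icc 1 (n+1) = insert (n+1) (Finset.Icc 1 n) := by
  ext k; simp [Finset.mem_Icc, Finset.mem_insert]; omega

lemma telescope_prod (g : ℕ → ℝ) (n : ℕ) :
    (∏ j ∈ Finset.Icc 1 n, (1 + g j)) - 1
      = ∑ j ∈ Finset.Icc 1 n, g j * ∏ k ∈ Finset.Icc 1 (j-1), (1 + g k) := by
  induction n with
  | zero => simp
  | succ n ih =>
    have hni : (n+1) ∉ Finset.Icc 1 n := by simp
    rw [icc_succ_insert n, Finset.prod_insert hni, Finset.sum_insert hni]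
    simp only [Nat.add_sub_cancel]
    rw [← ih]; ring

lemma sum_sq_le_sq_sum {ι : Type*} (s : Finset ι) (f : ι → ℝ) (hf : ∀ i ∈ s, 0 ≤ f i) :
    ∑ i ∈ s, (f i)^2 ≤ (∑ i ∈ s, f i)^2 := by
  have h1 : ∀ i ∈ s, (f i)^2 ≤ f i * ∑ j ∈ s, f j := fun i hi => by
    have h2 : f i ≤ ∑ j ∈ s, f j := Finset.single_le_sum hf hi
    have := hf i hi
    nlinarith
  calc ∑ i ∈ s, (f i)^2 ≤ ∑ i ∈ s, f i * ∑ j ∈ s, f j := Finset.sum_le_sum h1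
    _ = (∑ i ∈ s, f i)^2 := by rw [← Finset.sum_mul]; ring

lemma sum_Icc_pow_eq (x : ℝ) (n : ℕ) :
    ∑ j ∈ Finset.Icc 1 n, x^(j-1) = ∑ k ∈ Finset.range n, x^k := by
  induction n with
  | zero => simp
  | succ n ih =>
    rw [icc_succ_insert n, Finset.sum_insert (by simp), Finset.sum_range_succ, ih]
    simp only [Nat.add_sub_cancel]
    ring

lemma ceil_ge_one (j i : ℕ) (hi : 1 ≤ i) : 1 ≤ (i + 2^j - 1) / 2^j := by
  have h2 : 0 < 2^j := Nat.two_pow_pos j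
  rw [Nat.one_le_div_iff h2]
  omega

lemma ceil_le {h j i : ℕ} (hj : j ≤ h) (hi : i ≤ 2^h) : (i + 2^j - 1) / 2^j ≤ 2^(h-j) := by
  have h2 : 0 < 2^j := Nat.two_pow_pos j
  have hpow : 2^(h-j) * 2^j = 2^h := by rw [← pow_add]; congr 1; omega
  have hx : (2^(h-j)+1) * 2^j = 2^h + 2^j := by rw [add_mul, one_mul, hpow]
  have hlt : i + 2^j - 1 < (2^(h-j)+1) * 2^j := by omega
  have := (Nat.div_lt_iff_lt_mul h2).mpr hlt
  omega

/-- The finset of (level, index) pairs, as elements of `ℕ ×ₗ ℕ`. -/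
noncomputable def pairsFinset (h : ℕ) : Finset (ℕ ×ₗ ℕ) :=
  ((Finset.Icc 1 h ×ˢ Finset.Icc 1 (2^h)).filter
    (fun p => p.2 ≤ 2^(h - p.1))).map (Equiv.toEmbedding toLex)

lemma mem_pairsFinset {h : ℕ} {p : ℕ ×ₗ ℕ} :
    p ∈ pairsFinset h ↔ (1 ≤ (ofLex p).1 ∧ (ofLex p).1 ≤ h ∧ 1 ≤ (ofLex p).2 ∧
      (ofLex p).2 ≤ 2^(h - (ofLex p).1)) := by
  have hle : 2^(h - (ofLex p).1) ≤ 2^h := Nat.pow_le_pow_right (by norm_num) (Nat.sub_le h _)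
  simp only [pairsFinset, Finset.mem_map_equiv, Finset.mem_filter, Finset.mem_product,
    Finset.mem_Icc]
  constructor
  · rintro ⟨⟨⟨h1, h2⟩, h3, h4⟩, h5⟩; exact ⟨h1, h2, h3, h5⟩
  · rintro ⟨h1, h2, h3, h5⟩; exact ⟨⟨⟨h1, h2⟩, h3, le_trans h5 hle⟩, h5⟩

lemma sum_pairsFinset (h : ℕ) (F : ℕ → ℕ → ℝ) :
    ∑ p ∈ pairsFinset h, F (ofLex p).1 (ofLex p).2
      = ∑ j ∈ Finset.Icc 1 h, ∑ i ∈ Finset.Icc 1 (2^(h-j)), F j i := by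
  rw [pairsFinset, Finset.sum_map]
  simp only [Equiv.coe_toEmbedding, ofLex_toLex]
  rw [Finset.sum_filter, Finset.sum_product]
  refine Finset.sum_congr rfl fun j hj => ?_
  rw [← Finset.sum_filter]
  congr 1
  ext i
  have hle : 2^(h - j) ≤ 2^h := Nat.pow_le_pow_right (by norm_num) (Nat.sub_le h _)
  simp only [Finset.mem_filter, Finset.mem_Icc]
  omega

set_option maxHeartbeats 2000000 in
/-- Martingale concentration bound for the tree-structured products arising in
pairwise summation of `n = 2^h` numbers under stochastic rounding: the errors
`α^j_i` (level `j`, index `i`) are bounded by `u` almost surely and mean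
independent in the order of increasing level (and increasing index within each
level). Here `(i + 2^j - 1) / 2^j` is the natural-number ceiling `⌈i / 2^j⌉`. -/
theorem pairwise_martingale_bound {Ω : Type*} [MeasurableSpace Ω]
    (μ : Measure Ω) [IsProbabilityMeasure μ]
    (h : ℕ) (hh : 1 ≤ h) (u : ℝ) (hu0 : 0 < u) (hu1 : u < 1)
    (a : ℕ → ℝ) (α : ℕ → ℕ → Ω → ℝ)
    (hmeas : ∀ j i, Measurable (α j i))
    (hbd : ∀ j ∈ Finset.Icc 1 h, ∀ i ∈ Finset.Icc 1 (2 ^ (h - j)),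
      ∀ᵐ ω ∂μ, |α j i ω| ≤ u)
    (hmi : ∀ j ∈ Finset.Icc 1 h, ∀ i ∈ Finset.Icc 1 (2 ^ (h - j)),
      μ[α j i | ⨆ q ∈ {q : ℕ × ℕ |
            (1 ≤ q.1 ∧ q.1 ≤ h ∧ 1 ≤ q.2 ∧ q.2 ≤ 2 ^ (h - q.1)) ∧
            (q.1 < j ∨ (q.1 = j ∧ q.2 < i))},
          MeasurableSpace.comap (α q.1 q.2) inferInstance] =ᵐ[μ] 0)
    (lam : ℝ) (hlam0 : 0 < lam) (hlam1 : lam < 1) :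
    ENNReal.ofReal (1 - lam) ≤
      μ {ω | |∑ i ∈ Finset.Icc 1 (2 ^ h),
          a i * ((∏ j ∈ Finset.Icc 1 h, (1 + α j ((i + 2 ^ j - 1) / 2 ^ j) ω)) - 1)| ≤
        (∑ i ∈ Finset.Icc 1 (2 ^ h), |a i|) *
          (Real.sqrt (u * gammaFn (2 * h) u) * Real.sqrt (Real.log (2 / lam)))} := by
  classical
  -- notation
  set c : ℕ → ℕ → ℕ := fun j i => (i + 2 ^ j - 1) / 2 ^ j with hcdef
  set S : Ω → ℝ := fun ω => ∑ i ∈ Finset.Icc 1 (2 ^ h),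
      a i * ((∏ j ∈ Finset.Icc 1 h, (1 + α j (c j i) ω)) - 1) with hSdef
  set A : ℝ := ∑ i ∈ Finset.Icc 1 (2 ^ h), |a i| with hAdef
  set γ : ℝ := gammaFn (2 * h) u with hγdef
  set L : ℝ := Real.log (2 / lam) with hLdef
  set s₀ : ℝ := A * (Real.sqrt (u * γ) * Real.sqrt L) with hs₀def
  suffices Hmain : ENNReal.ofReal (1 - lam) ≤ μ {ω | |S ω| ≤ s₀} by exact Hmain
  have hAnonneg : 0 ≤ A := Finset.sum_nonneg fun i _ => abs_nonneg _
  -- trivial case A = 0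
  by_cases hA0 : A = 0
  · have hzero : ∀ i ∈ Finset.Icc 1 (2 ^ h), a i = 0 := fun i hi =>
      abs_eq_zero.mp <| (Finset.sum_eq_zero_iff_of_nonneg fun i _ => abs_nonneg (a i)).mp
        hA0 i hi
    have hSzero : ∀ ω, S ω = 0 := fun ω =>
      Finset.sum_eq_zero fun i hi => by rw [hzero i hi, zero_mul]
    have hset : {ω | |S ω| ≤ s₀} = Set.univ := by
      ext ω
      simp only [Set.mem_setOf_eq, Set.mem_univ, iff_true]
      rw [hSzero ω, abs_zero, hs₀def, hA0, zero_mul]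
    rw [hset, measure_univ]
    exact ENNReal.ofReal_le_one.mpr (by linarith)
  have hApos : 0 < A := lt_of_le_of_ne hAnonneg (Ne.symm hA0)
  -- positivity facts
  have hγpos : 0 < γ := by
    have h1 : (1:ℝ) < (1 + u) ^ (2 * h) := one_lt_pow₀ (by linarith) (by omega)
    rw [hγdef]; unfold gammaFn; linarith
  have huγ : 0 < u * γ := mul_pos hu0 hγpos
  have hLpos : 0 < L := Real.log_pos (by rw [lt_div_iff₀ hlam0]; linarith)
  have hs₀pos : 0 < s₀ :=
    mul_pos hApos (mul_pos (Real.sqrt_pos.mpr huγ) (Real.sqrt_pos.mpr hLpos))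
  set V : ℝ := A ^ 2 * (u * γ) / 2 with hVdef
  have hVpos : 0 < V := by positivity
  set t : ℝ := s₀ / V with htdef
  have htpos : 0 < t := div_pos hs₀pos hVpos
  -- ceiling bounds
  have hc_mem : ∀ j i : ℕ, j ≤ h → 1 ≤ i → i ≤ 2 ^ h →
      c j i ∈ Finset.Icc 1 (2 ^ (h - j)) := fun j i hj hi1 hi2 =>
    Finset.mem_Icc.mpr ⟨ceil_ge_one j i hi1, ceil_le hj hi2⟩
  -- range predicate
  set P : ℕ × ℕ → Prop := fun q =>
    1 ≤ q.1 ∧ q.1 ≤ h ∧ 1 ≤ q.2 ∧ q.2 ≤ 2 ^ (h - q.1) with hPdef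
  -- the random variables and weights indexed by lexicographic pairs
  set X : ℕ ×ₗ ℕ → Ω → ℝ := fun p ω =>
    if P (ofLex p) then α (ofLex p).1 (ofLex p).2 ω else 0 with hXdef
  set W0 : ℕ ×ₗ ℕ → Ω → ℝ := fun p ω =>
    if P (ofLex p) then
      ∑ i ∈ (Finset.Icc 1 (2 ^ h)).filter (fun i => c (ofLex p).1 i = (ofLex p).2),
        a i * ∏ k ∈ Finset.Icc 1 ((ofLex p).1 - 1), (1 + α k (c k i) ω)
    else 0 with hW0def
  set b0 : ℕ ×ₗ ℕ → ℝ := fun p =>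
    if P (ofLex p) then
      (1 + u) ^ ((ofLex p).1 - 1) *
        ∑ i ∈ (Finset.Icc 1 (2 ^ h)).filter (fun i => c (ofLex p).1 i = (ofLex p).2), |a i|
    else 0 with hb0def
  set 𝒢 : ℕ ×ₗ ℕ → MeasurableSpace Ω := fun p => ⨆ q ∈ {q : ℕ × ℕ |
      (1 ≤ q.1 ∧ q.1 ≤ h ∧ 1 ≤ q.2 ∧ q.2 ≤ 2 ^ (h - q.1)) ∧
      (q.1 < (ofLex p).1 ∨ (q.1 = (ofLex p).1 ∧ q.2 < (ofLex p).2))},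
      MeasurableSpace.comap (α q.1 q.2) inferInstance with h𝒢def
  -- global a.e. bound
  have Hbd : ∀ᵐ ω ∂μ, ∀ j ∈ Finset.Icc 1 h, ∀ i ∈ Finset.Icc 1 (2 ^ (h - j)),
      |α j i ω| ≤ u := by
    refine (ae_ball_iff (Finset.Icc 1 h).countable_toSet).mpr fun j hj => ?_
    exact (ae_ball_iff (Finset.Icc 1 (2 ^ (h - j))).countable_toSet).mpr fun i hi =>
      hbd j hj i hi
  -- σ-algebras are sub-σ-algebras
  have h𝒢le : ∀ p, 𝒢 p ≤ (inferInstance : MeasurableSpace Ω) := fun p =>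
    iSup₂_le fun q _ => measurable_iff_comap_le.mp (hmeas q.1 q.2)
  -- membership gives measurability
  have hmem𝒢 : ∀ (p : ℕ ×ₗ ℕ) (j i : ℕ),
      (1 ≤ j ∧ j ≤ h ∧ 1 ≤ i ∧ i ≤ 2 ^ (h - j)) →
      (j < (ofLex p).1 ∨ (j = (ofLex p).1 ∧ i < (ofLex p).2)) →
      Measurable[𝒢 p] (α j i) := by
    intro p j i hr hlex
    have hle : MeasurableSpace.comap (α j i) inferInstance ≤ 𝒢 p := by
      rw [h𝒢def]
      have hmem : ((j, i) : ℕ × ℕ) ∈ {q : ℕ × ℕ |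
          (1 ≤ q.1 ∧ q.1 ≤ h ∧ 1 ≤ q.2 ∧ q.2 ≤ 2 ^ (h - q.1)) ∧
          (q.1 < (ofLex p).1 ∨ (q.1 = (ofLex p).1 ∧ q.2 < (ofLex p).2))} := ⟨hr, hlex⟩
      exact le_iSup₂ (f := fun (q : ℕ × ℕ) (_ : q ∈ {q : ℕ × ℕ |
          (1 ≤ q.1 ∧ q.1 ≤ h ∧ 1 ≤ q.2 ∧ q.2 ≤ 2 ^ (h - q.1)) ∧
          (q.1 < (ofLex p).1 ∨ (q.1 = (ofLex p).1 ∧ q.2 < (ofLex p).2))}) =>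
        MeasurableSpace.comap (α q.1 q.2) inferInstance) ((j, i) : ℕ × ℕ) hmem
    exact fun s hs => hle _ (⟨s, hs, rfl⟩ : MeasurableSpace.MeasurableSet'
      (MeasurableSpace.comap (α j i) inferInstance) _)
  -- measurability of X
  have hXm : ∀ p, Measurable (X p) := by
    intro p
    by_cases hp : P (ofLex p)
    · simp only [hXdef, if_pos hp]; exact hmeas _ _
    · simp only [hXdef, if_neg hp]; exact measurable_const
  have hX𝒢 : ∀ p q : ℕ ×ₗ ℕ, p < q → Measurable[𝒢 q] (X p) := by
    intro p q hpq
    by_cases hp : P (ofLex p)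
    · simp only [hXdef, if_pos hp]
      refine hmem𝒢 q (ofLex p).1 (ofLex p).2 hp ?_
      exact Prod.Lex.lt_iff.mp hpq
    · simp only [hXdef, if_neg hp]; exact measurable_const
  -- measurability of W0 (and variants) w.r.t. 𝒢 q when level of p is ≤ level of q
  have hW0𝒢 : ∀ p q : ℕ ×ₗ ℕ, (ofLex p).1 ≤ (ofLex q).1 → Measurable[𝒢 q] (W0 p) := by
    intro p q hpq
    by_cases hp : P (ofLex p)
    · simp only [hW0def, if_pos hp]
      refine Finset.measurable_sum _ fun i hi => ?_
      refine Measurable.const_mul ?_ (a i)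
      refine Finset.measurable_prod _ fun k hk => ?_
      refine Measurable.const_add ?_ 1
      rw [Finset.mem_filter, Finset.mem_Icc] at hi
      rw [Finset.mem_Icc] at hk
      obtain ⟨hp1, hp2, hp3, hp4⟩ := hp
      have hkh : k ≤ h := by omega
      have hcmem := hc_mem k i hkh hi.1.1 hi.1.2
      rw [Finset.mem_Icc] at hcmem
      refine hmem𝒢 q k (c k i) ⟨hk.1, hkh, hcmem.1, hcmem.2⟩ (Or.inl ?_)
      omega
    · simp only [hW0def, if_neg hp]; exact measurable_const
  have hp1_le_of_le : ∀ p q : ℕ ×ₗ ℕ, p ≤ q → (ofLex p).1 ≤ (ofLex q).1 := by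
    intro p q hpq
    rcases Prod.Lex.le_iff.mp hpq with h1 | ⟨h1, _⟩
    · exact h1.le
    · exact h1.le
  -- a.e. bounds on X
  have hXbd : ∀ p, ∀ᵐ ω ∂μ, |X p ω| ≤ u := by
    intro p
    by_cases hp : P (ofLex p)
    · simp only [hXdef, if_pos hp]
      exact hbd (ofLex p).1 (Finset.mem_Icc.mpr ⟨hp.1, hp.2.1⟩) (ofLex p).2
        (Finset.mem_Icc.mpr ⟨hp.2.2.1, hp.2.2.2⟩)
    · simp only [hXdef, if_neg hp]
      filter_upwards with ω
      simp [hu0.le]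
  -- a.e. bounds on W0
  have hb0nonneg : ∀ p, 0 ≤ b0 p := by
    intro p
    by_cases hp : P (ofLex p)
    · simp only [hb0def, if_pos hp]
      exact mul_nonneg (pow_nonneg (by linarith) _)
        (Finset.sum_nonneg fun i _ => abs_nonneg _)
    · simp only [hb0def, if_neg hp]
      exact le_rfl
  have hW0bd : ∀ p, ∀ᵐ ω ∂μ, |W0 p ω| ≤ b0 p := by
    intro p
    by_cases hp : P (ofLex p)
    · filter_upwards [Hbd] with ω hω
      simp only [hW0def, hb0def, if_pos hp]
      obtain ⟨hp1, hp2, hp3, hp4⟩ := hp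
      have hprod : ∀ i ∈ (Finset.Icc 1 (2 ^ h)).filter
          (fun i => c (ofLex p).1 i = (ofLex p).2),
          |∏ k ∈ Finset.Icc 1 ((ofLex p).1 - 1), (1 + α k (c k i) ω)| ≤
            (1 + u) ^ ((ofLex p).1 - 1) := by
        intro i hi
        rw [Finset.mem_filter, Finset.mem_Icc] at hi
        rw [Finset.abs_prod]
        have hcard : (Finset.Icc 1 ((ofLex p).1 - 1)).card = (ofLex p).1 - 1 := by
          rw [Nat.card_Icc]; omega
        calc ∏ k ∈ Finset.Icc 1 ((ofLex p).1 - 1), |1 + α k (c k i) ω|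
            ≤ ∏ k ∈ Finset.Icc 1 ((ofLex p).1 - 1), (1 + u) := by
              refine Finset.prod_le_prod (fun k _ => abs_nonneg _) fun k hk => ?_
              rw [Finset.mem_Icc] at hk
              have hkh : k ≤ h := by omega
              have hcmem := hc_mem k i hkh hi.1.1 hi.1.2
              have hα := hω k (Finset.mem_Icc.mpr ⟨hk.1, hkh⟩) (c k i) hcmem
              calc |1 + α k (c k i) ω| ≤ |(1:ℝ)| + |α k (c k i) ω| := abs_add_le _ _
                _ ≤ 1 + u := by rw [abs_one]; linarith
          _ = (1 + u) ^ ((ofLex p).1 - 1) := by rw [Finset.prod_const, hcard]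
      calc |∑ i ∈ (Finset.Icc 1 (2 ^ h)).filter
            (fun i => c (ofLex p).1 i = (ofLex p).2),
            a i * ∏ k ∈ Finset.Icc 1 ((ofLex p).1 - 1), (1 + α k (c k i) ω)|
          ≤ ∑ i ∈ (Finset.Icc 1 (2 ^ h)).filter
            (fun i => c (ofLex p).1 i = (ofLex p).2),
            |a i * ∏ k ∈ Finset.Icc 1 ((ofLex p).1 - 1), (1 + α k (c k i) ω)| :=
            Finset.abs_sum_le_sum_abs _ _
        _ ≤ ∑ i ∈ (Finset.Icc 1 (2 ^ h)).filter
            (fun i => c (ofLex p).1 i = (ofLex p).2),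
            |a i| * (1 + u) ^ ((ofLex p).1 - 1) := by
            refine Finset.sum_le_sum fun i hi => ?_
            rw [abs_mul]
            exact mul_le_mul_of_nonneg_left (hprod i hi) (abs_nonneg _)
        _ = (1 + u) ^ ((ofLex p).1 - 1) *
            ∑ i ∈ (Finset.Icc 1 (2 ^ h)).filter
              (fun i => c (ofLex p).1 i = (ofLex p).2), |a i| := by
            rw [← Finset.sum_mul, mul_comm]
    · simp only [hW0def, hb0def, if_neg hp]
      filter_upwards with ω
      simp
  -- conditional expectations vanish
  have hcond : ∀ p, μ[X p | 𝒢 p] =ᵐ[μ] 0 := by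
    intro p
    by_cases hp : P (ofLex p)
    · have hXeq : X p = α (ofLex p).1 (ofLex p).2 := by
        funext ω; simp only [hXdef, if_pos hp]
      rw [hXeq, h𝒢def]
      exact hmi (ofLex p).1 (Finset.mem_Icc.mpr ⟨hp.1, hp.2.1⟩) (ofLex p).2
        (Finset.mem_Icc.mpr ⟨hp.2.2.1, hp.2.2.2⟩)
    · have hXeq : X p = (0 : Ω → ℝ) := by
        funext ω; simp only [hXdef, if_neg hp]; rfl
      rw [hXeq, condExp_zero]
  
  -- maps-to property of the ceiling
  have hc_maps : ∀ j ∈ Finset.Icc 1 h, ∀ i ∈ Finset.Icc 1 (2 ^ h),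
      c j i ∈ Finset.Icc 1 (2 ^ (h - j)) := by
    intro j hj i hi
    rw [Finset.mem_Icc] at hj hi
    exact hc_mem j i hj.2 hi.1 hi.2
  -- the key pointwise identity
  have key1 : ∀ ω, ∑ p ∈ pairsFinset h, X p ω * W0 p ω = S ω := by
    intro ω
    have e1 : ∀ j ∈ Finset.Icc 1 h, ∀ i' ∈ Finset.Icc 1 (2 ^ (h - j)),
        X (toLex (j, i')) ω * W0 (toLex (j, i')) ω
          = ∑ i ∈ (Finset.Icc 1 (2 ^ h)).filter (fun i => c j i = i'),
              α j i' ω * (a i * ∏ k ∈ Finset.Icc 1 (j - 1), (1 + α k (c k i) ω)) := by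
      intro j hj i' hi'
      rw [Finset.mem_Icc] at hj hi'
      have hp : P ((j, i') : ℕ × ℕ) := ⟨hj.1, hj.2, hi'.1, hi'.2⟩
      simp only [hXdef, hW0def, if_pos (show P (ofLex (toLex (j, i'))) from hp)]
      simp only [ofLex_toLex]
      rw [Finset.mul_sum]
      rfl
    have e2 : ∀ j ∈ Finset.Icc 1 h,
        (∑ i' ∈ Finset.Icc 1 (2 ^ (h - j)),
          ∑ i ∈ (Finset.Icc 1 (2 ^ h)).filter (fun i => c j i = i'),
            α j i' ω * (a i * ∏ k ∈ Finset.Icc 1 (j - 1), (1 + α k (c k i) ω)))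
        = ∑ i ∈ Finset.Icc 1 (2 ^ h),
            α j (c j i) ω * (a i * ∏ k ∈ Finset.Icc 1 (j - 1), (1 + α k (c k i) ω)) := by
      intro j hj
      rw [← Finset.sum_fiberwise_of_maps_to (fun i hi => hc_maps j hj i hi)
        (fun i => α j (c j i) ω * (a i * ∏ k ∈ Finset.Icc 1 (j - 1), (1 + α k (c k i) ω)))]
      refine Finset.sum_congr rfl fun i' hi' => Finset.sum_congr rfl fun i hi => ?_
      rw [Finset.mem_filter] at hi
      rw [hi.2]
    calc ∑ p ∈ pairsFinset h, X p ω * W0 p ω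
        = ∑ j ∈ Finset.Icc 1 h, ∑ i' ∈ Finset.Icc 1 (2 ^ (h - j)),
            X (toLex (j, i')) ω * W0 (toLex (j, i')) ω := by
          rw [← sum_pairsFinset h (fun j i' => X (toLex (j, i')) ω * W0 (toLex (j, i')) ω)]
          rfl
      _ = ∑ j ∈ Finset.Icc 1 h, ∑ i ∈ Finset.Icc 1 (2 ^ h),
            α j (c j i) ω * (a i * ∏ k ∈ Finset.Icc 1 (j - 1), (1 + α k (c k i) ω)) := by
          refine Finset.sum_congr rfl fun j hj => ?_
          rw [← e2 j hj]
          exact Finset.sum_congr rfl fun i' hi' => e1 j hj i' hi'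
      _ = ∑ i ∈ Finset.Icc 1 (2 ^ h), ∑ j ∈ Finset.Icc 1 h,
            α j (c j i) ω * (a i * ∏ k ∈ Finset.Icc 1 (j - 1), (1 + α k (c k i) ω)) :=
          Finset.sum_comm
      _ = S ω := by
          rw [hSdef]
          refine Finset.sum_congr rfl fun i hi => ?_
          rw [telescope_prod (fun j => α j (c j i) ω) h, Finset.mul_sum]
          exact Finset.sum_congr rfl fun j hj => by ring
  -- the variance bound
  have key2 : ∑ p ∈ pairsFinset h, u ^ 2 * (b0 p) ^ 2 ≤ V := by
    have e0 : ∑ p ∈ pairsFinset h, u ^ 2 * (b0 p) ^ 2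
        = ∑ j ∈ Finset.Icc 1 h, ∑ i' ∈ Finset.Icc 1 (2 ^ (h - j)),
            u ^ 2 * (b0 (toLex (j, i'))) ^ 2 :=
      (sum_pairsFinset h (fun j i' => u ^ 2 * (b0 (toLex (j, i'))) ^ 2))
    have e1 : ∀ j ∈ Finset.Icc 1 h,
        (∑ i' ∈ Finset.Icc 1 (2 ^ (h - j)), u ^ 2 * (b0 (toLex (j, i'))) ^ 2)
          ≤ u ^ 2 * A ^ 2 * ((1 + u) ^ 2) ^ (j - 1) := by
      intro j hj
      have hjI := hj
      rw [Finset.mem_Icc] at hjI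
      have hA_fib : (∑ i' ∈ Finset.Icc 1 (2 ^ (h - j)),
          ∑ i ∈ (Finset.Icc 1 (2 ^ h)).filter (fun i => c j i = i'), |a i|) = A := by
        rw [hAdef]
        exact Finset.sum_fiberwise_of_maps_to (fun i hi => hc_maps j hj i hi) _
      have hsq : (∑ i' ∈ Finset.Icc 1 (2 ^ (h - j)),
          (∑ i ∈ (Finset.Icc 1 (2 ^ h)).filter (fun i => c j i = i'), |a i|) ^ 2) ≤ A ^ 2 := by
        conv_rhs => rw [← hA_fib]
        exact sum_sq_le_sq_sum _ _ fun i' _ => Finset.sum_nonneg fun i _ => abs_nonneg _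
      have hterm : ∀ i' ∈ Finset.Icc 1 (2 ^ (h - j)),
          u ^ 2 * (b0 (toLex (j, i'))) ^ 2
            = u ^ 2 * ((1 + u) ^ 2) ^ (j - 1) *
              (∑ i ∈ (Finset.Icc 1 (2 ^ h)).filter (fun i => c j i = i'), |a i|) ^ 2 := by
        intro i' hi'
        rw [Finset.mem_Icc] at hi'
        have hp : P ((j, i') : ℕ × ℕ) := ⟨hjI.1, hjI.2, hi'.1, hi'.2⟩
        simp only [hb0def, if_pos (show P (ofLex (toLex (j, i'))) from hp)]
        simp only [ofLex_toLex]
        rw [mul_pow, ← pow_mul, ← pow_mul]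
        ring_nf
        rfl
      calc (∑ i' ∈ Finset.Icc 1 (2 ^ (h - j)), u ^ 2 * (b0 (toLex (j, i'))) ^ 2)
          = ∑ i' ∈ Finset.Icc 1 (2 ^ (h - j)),
              u ^ 2 * ((1 + u) ^ 2) ^ (j - 1) *
                (∑ i ∈ (Finset.Icc 1 (2 ^ h)).filter (fun i => c j i = i'), |a i|) ^ 2 :=
            Finset.sum_congr rfl hterm
        _ = u ^ 2 * ((1 + u) ^ 2) ^ (j - 1) *
              ∑ i' ∈ Finset.Icc 1 (2 ^ (h - j)),
                (∑ i ∈ (Finset.Icc 1 (2 ^ h)).filter (fun i => c j i = i'), |a i|) ^ 2 := by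
            rw [← Finset.mul_sum]
        _ ≤ u ^ 2 * A ^ 2 * ((1 + u) ^ 2) ^ (j - 1) := by
            have hfac : (0:ℝ) ≤ u ^ 2 * ((1 + u) ^ 2) ^ (j - 1) := by positivity
            calc u ^ 2 * ((1 + u) ^ 2) ^ (j - 1) *
                  ∑ i' ∈ Finset.Icc 1 (2 ^ (h - j)),
                    (∑ i ∈ (Finset.Icc 1 (2 ^ h)).filter (fun i => c j i = i'), |a i|) ^ 2
                ≤ u ^ 2 * ((1 + u) ^ 2) ^ (j - 1) * A ^ 2 :=
                  mul_le_mul_of_nonneg_left hsq hfac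
              _ = u ^ 2 * A ^ 2 * ((1 + u) ^ 2) ^ (j - 1) := by ring
    have hgeom : ∑ j ∈ Finset.Icc 1 h, ((1 + u) ^ 2) ^ (j - 1)
        = (((1 + u) ^ 2) ^ h - 1) / ((1 + u) ^ 2 - 1) := by
      rw [sum_Icc_pow_eq ((1 + u) ^ 2) h]
      exact geom_sum_eq (by nlinarith) h
    have hγeq : ((1 + u) ^ 2) ^ h - 1 = γ := by
      rw [hγdef]; unfold gammaFn; rw [← pow_mul]
    calc ∑ p ∈ pairsFinset h, u ^ 2 * (b0 p) ^ 2
        = ∑ j ∈ Finset.Icc 1 h, ∑ i' ∈ Finset.Icc 1 (2 ^ (h - j)),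
            u ^ 2 * (b0 (toLex (j, i'))) ^ 2 := e0
      _ ≤ ∑ j ∈ Finset.Icc 1 h, u ^ 2 * A ^ 2 * ((1 + u) ^ 2) ^ (j - 1) :=
          Finset.sum_le_sum e1
      _ = u ^ 2 * A ^ 2 * ∑ j ∈ Finset.Icc 1 h, ((1 + u) ^ 2) ^ (j - 1) := by
          rw [← Finset.mul_sum]
      _ = u ^ 2 * A ^ 2 * (γ / ((1 + u) ^ 2 - 1)) := by rw [hgeom, hγeq]
      _ ≤ V := by
          rw [hVdef]
          have hD : (0:ℝ) < (1 + u) ^ 2 - 1 := by nlinarith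
          rw [mul_div_assoc']
          rw [div_le_div_iff₀ hD (by norm_num : (0:ℝ) < 2)]
          have base : 2 * u ^ 2 ≤ u * ((1 + u) ^ 2 - 1) := by nlinarith
          have hAγ : (0:ℝ) ≤ A ^ 2 * γ := mul_nonneg (sq_nonneg A) hγpos.le
          nlinarith [mul_le_mul_of_nonneg_left base hAγ]
  -- measurability and boundedness of S
  have hSmeas : Measurable S := by
    rw [hSdef]
    refine Finset.measurable_sum _ fun i _ => ?_
    refine Measurable.const_mul ?_ (a i)
    refine Measurable.sub ?_ measurable_const
    exact Finset.measurable_prod _ fun j _ => Measurable.const_add (hmeas _ _) 1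
  have hSbd : ∀ᵐ ω ∂μ, |S ω| ≤ A * ((1 + u) ^ h + 1) := by
    filter_upwards [Hbd] with ω hω
    rw [hSdef]
    have hterm : ∀ i ∈ Finset.Icc 1 (2 ^ h),
        |a i * ((∏ j ∈ Finset.Icc 1 h, (1 + α j (c j i) ω)) - 1)|
          ≤ |a i| * ((1 + u) ^ h + 1) := by
      intro i hi
      rw [Finset.mem_Icc] at hi
      rw [abs_mul]
      refine mul_le_mul_of_nonneg_left ?_ (abs_nonneg _)
      have hprod : |∏ j ∈ Finset.Icc 1 h, (1 + α j (c j i) ω)| ≤ (1 + u) ^ h := by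
        rw [Finset.abs_prod]
        have hcard : (Finset.Icc 1 h).card = h := by rw [Nat.card_Icc]; omega
        calc ∏ j ∈ Finset.Icc 1 h, |1 + α j (c j i) ω|
            ≤ ∏ j ∈ Finset.Icc 1 h, (1 + u) := by
              refine Finset.prod_le_prod (fun j _ => abs_nonneg _) fun j hj => ?_
              have hjI := hj
              rw [Finset.mem_Icc] at hjI
              have hcmem := hc_mem j i hjI.2 hi.1 hi.2
              have hα := hω j hj (c j i) hcmem
              calc |1 + α j (c j i) ω| ≤ |(1:ℝ)| + |α j (c j i) ω| := abs_add_le _ _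
                _ ≤ 1 + u := by rw [abs_one]; linarith
          _ = (1 + u) ^ h := by rw [Finset.prod_const, hcard]
      calc |(∏ j ∈ Finset.Icc 1 h, (1 + α j (c j i) ω)) - 1|
          ≤ |∏ j ∈ Finset.Icc 1 h, (1 + α j (c j i) ω)| + |(1:ℝ)| := abs_sub _ _
        _ ≤ (1 + u) ^ h + 1 := by rw [abs_one]; linarith
    calc |∑ i ∈ Finset.Icc 1 (2 ^ h),
          a i * ((∏ j ∈ Finset.Icc 1 h, (1 + α j (c j i) ω)) - 1)|
        ≤ ∑ i ∈ Finset.Icc 1 (2 ^ h),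
          |a i * ((∏ j ∈ Finset.Icc 1 h, (1 + α j (c j i) ω)) - 1)| :=
          Finset.abs_sum_le_sum_abs _ _
      _ ≤ ∑ i ∈ Finset.Icc 1 (2 ^ h), |a i| * ((1 + u) ^ h + 1) :=
          Finset.sum_le_sum hterm
      _ = A * ((1 + u) ^ h + 1) := by rw [← Finset.sum_mul, ← hAdef]
  -- the MGF bounds
  have hmgfS : ∫ ω, Real.exp (t * S ω) ∂μ ≤ Real.exp (t ^ 2 * V / 2) := by
    have happ := mgf_bound (μ := μ) hu0 X (fun p ω => t * W0 p ω) (fun p => t * b0 p)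
      (fun p => mul_nonneg htpos.le (hb0nonneg p)) 𝒢 h𝒢le hXm hX𝒢
      (fun p q hpq => ((hW0𝒢 p q (hp1_le_of_le p q hpq)).const_mul t))
      hXbd
      (fun p => by
        filter_upwards [hW0bd p] with ω hω
        rw [abs_mul, abs_of_pos htpos]
        exact mul_le_mul_of_nonneg_left hω htpos.le)
      hcond (pairsFinset h)
    have heq : ∀ ω, (∑ p ∈ pairsFinset h, X p ω * (t * W0 p ω)) = t * S ω := by
      intro ω
      rw [← key1 ω, Finset.mul_sum]
      exact Finset.sum_congr rfl fun p _ => by ring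
    have hbsum : (∑ p ∈ pairsFinset h, u ^ 2 * (t * b0 p) ^ 2 / 2) ≤ t ^ 2 * V / 2 := by
      have e0 : (∑ p ∈ pairsFinset h, u ^ 2 * (t * b0 p) ^ 2 / 2)
          = t ^ 2 / 2 * ∑ p ∈ pairsFinset h, u ^ 2 * (b0 p) ^ 2 := by
        rw [Finset.mul_sum]
        exact Finset.sum_congr rfl fun p _ => by ring
      rw [e0]
      calc t ^ 2 / 2 * ∑ p ∈ pairsFinset h, u ^ 2 * (b0 p) ^ 2
          ≤ t ^ 2 / 2 * V := mul_le_mul_of_nonneg_left key2 (by positivity)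
        _ = t ^ 2 * V / 2 := by ring
    calc ∫ ω, Real.exp (t * S ω) ∂μ
        = ∫ ω, Real.exp (∑ p ∈ pairsFinset h, X p ω * (t * W0 p ω)) ∂μ := by
          refine integral_congr_ae (.of_forall fun ω => ?_)
          exact congrArg Real.exp (heq ω).symm
      _ ≤ Real.exp (∑ p ∈ pairsFinset h, u ^ 2 * (t * b0 p) ^ 2 / 2) := happ
      _ ≤ Real.exp (t ^ 2 * V / 2) := Real.exp_le_exp.mpr hbsum
  have hmgfnegS : ∫ ω, Real.exp (t * (-S ω)) ∂μ ≤ Real.exp (t ^ 2 * V / 2) := by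
    have happ := mgf_bound (μ := μ) hu0 X (fun p ω => -(t * W0 p ω)) (fun p => t * b0 p)
      (fun p => mul_nonneg htpos.le (hb0nonneg p)) 𝒢 h𝒢le hXm hX𝒢
      (fun p q hpq => ((hW0𝒢 p q (hp1_le_of_le p q hpq)).const_mul t).neg)
      hXbd
      (fun p => by
        filter_upwards [hW0bd p] with ω hω
        rw [abs_neg, abs_mul, abs_of_pos htpos]
        exact mul_le_mul_of_nonneg_left hω htpos.le)
      hcond (pairsFinset h)
    have heq : ∀ ω, (∑ p ∈ pairsFinset h, X p ω * (-(t * W0 p ω))) = t * (-S ω) := by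
      intro ω
      have e : (∑ p ∈ pairsFinset h, X p ω * (-(t * W0 p ω)))
          = -(t * ∑ p ∈ pairsFinset h, X p ω * W0 p ω) := by
        rw [Finset.mul_sum, ← Finset.sum_neg_distrib]
        exact Finset.sum_congr rfl fun p _ => by ring
      rw [e, key1 ω]; ring
    have hbsum : (∑ p ∈ pairsFinset h, u ^ 2 * (t * b0 p) ^ 2 / 2) ≤ t ^ 2 * V / 2 := by
      have e0 : (∑ p ∈ pairsFinset h, u ^ 2 * (t * b0 p) ^ 2 / 2)
          = t ^ 2 / 2 * ∑ p ∈ pairsFinset h, u ^ 2 * (b0 p) ^ 2 := by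
        rw [Finset.mul_sum]
        exact Finset.sum_congr rfl fun p _ => by ring
      rw [e0]
      calc t ^ 2 / 2 * ∑ p ∈ pairsFinset h, u ^ 2 * (b0 p) ^ 2
          ≤ t ^ 2 / 2 * V := mul_le_mul_of_nonneg_left key2 (by positivity)
        _ = t ^ 2 * V / 2 := by ring
    calc ∫ ω, Real.exp (t * (-S ω)) ∂μ
        = ∫ ω, Real.exp (∑ p ∈ pairsFinset h, X p ω * (-(t * W0 p ω))) ∂μ := by
          refine integral_congr_ae (.of_forall fun ω => ?_)
          exact congrArg Real.exp (heq ω).symm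
      _ ≤ Real.exp (∑ p ∈ pairsFinset h, u ^ 2 * (t * b0 p) ^ 2 / 2) := happ
      _ ≤ Real.exp (t ^ 2 * V / 2) := Real.exp_le_exp.mpr hbsum
  -- Chernoff bounds for both tails
  have h1 : (μ {ω | s₀ ≤ S ω}).toReal ≤ Real.exp (-(s₀ ^ 2) / (2 * V)) :=
    chernoff hSmeas hs₀pos hVpos hSbd hmgfS
  have h2 : (μ {ω | s₀ ≤ -S ω}).toReal ≤ Real.exp (-(s₀ ^ 2) / (2 * V)) :=
    chernoff hSmeas.neg hs₀pos hVpos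
      (by filter_upwards [hSbd] with ω hω; rw [Pi.neg_apply, abs_neg]; exact hω) hmgfnegS
  -- the exponential equals lam / 2
  have hexp : Real.exp (-(s₀ ^ 2) / (2 * V)) = lam / 2 := by
    have e1 : s₀ ^ 2 = A ^ 2 * (u * γ) * L := by
      rw [hs₀def, mul_pow, mul_pow, Real.sq_sqrt huγ.le, Real.sq_sqrt hLpos.le]; ring
    have e2 : 2 * V = A ^ 2 * (u * γ) := by rw [hVdef]; ring
    have hX0 : A ^ 2 * (u * γ) ≠ 0 := by positivity
    have e4 : A ^ 2 * (u * γ) * L / (A ^ 2 * (u * γ)) = L := by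
      rw [mul_comm (A ^ 2 * (u * γ)) L, mul_div_assoc, div_self hX0, mul_one]
    have e3 : -(s₀ ^ 2) / (2 * V) = -L := by
      rw [e1, e2, neg_div, e4]
    rw [e3, Real.exp_neg, hLdef, Real.exp_log (by positivity), inv_div]
  -- converting to measures
  have hμ1 : μ {ω | s₀ ≤ S ω} ≤ ENNReal.ofReal (lam / 2) := by
    rw [← ENNReal.ofReal_toReal (measure_ne_top μ _)]
    exact ENNReal.ofReal_le_ofReal (h1.trans_eq hexp)
  have hμ2 : μ {ω | s₀ ≤ -S ω} ≤ ENNReal.ofReal (lam / 2) := by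
    rw [← ENNReal.ofReal_toReal (measure_ne_top μ _)]
    exact ENNReal.ofReal_le_ofReal (h2.trans_eq hexp)
  have hEc : {ω | |S ω| ≤ s₀}ᶜ ⊆ {ω | s₀ ≤ S ω} ∪ {ω | s₀ ≤ -S ω} := by
    intro ω hω
    simp only [Set.mem_compl_iff, Set.mem_setOf_eq, not_le] at hω
    rcases le_total 0 (S ω) with hpos | hneg
    · left
      simp only [Set.mem_setOf_eq]
      rw [abs_of_nonneg hpos] at hω
      linarith
    · right
      simp only [Set.mem_setOf_eq]
      rw [abs_of_nonpos hneg] at hω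
      linarith
  have hcompl : μ ({ω | |S ω| ≤ s₀}ᶜ) ≤ ENNReal.ofReal lam := by
    calc μ ({ω | |S ω| ≤ s₀}ᶜ) ≤ μ ({ω | s₀ ≤ S ω} ∪ {ω | s₀ ≤ -S ω}) := measure_mono hEc
      _ ≤ μ {ω | s₀ ≤ S ω} + μ {ω | s₀ ≤ -S ω} := measure_union_le _ _
      _ ≤ ENNReal.ofReal (lam / 2) + ENNReal.ofReal (lam / 2) := add_le_add hμ1 hμ2
      _ = ENNReal.ofReal lam := by
          rw [← ENNReal.ofReal_add (by linarith) (by linarith)]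
          norm_num
  have hEmeas : MeasurableSet {ω | |S ω| ≤ s₀} :=
    measurableSet_le hSmeas.abs measurable_const
  have hsum := prob_add_prob_compl (μ := μ) hEmeas
  have hfinal : ENNReal.ofReal (1 - lam) + ENNReal.ofReal lam ≤
      μ {ω | |S ω| ≤ s₀} + ENNReal.ofReal lam := by
    rw [← ENNReal.ofReal_add (by linarith) hlam0.le, sub_add_cancel, ENNReal.ofReal_one]
    rw [← hsum]
    exact add_le_add_right hcompl _
  exact (ENNReal.add_le_add_iff_right ENNReal.ofReal_ne_top).mp hfinal
end

section
/- Let p ≥ 1 and r ≥ 1 be integers and F_k = { m·2^e : m, e ∈ ℤ, |m| < 2^k } for k ∈ {p, p+r}. Let x > 0 with x ∉ F_p, set ⌊x⌋_p = max{ y ∈ F_p : y ≤ x }, ⌈x⌉_p = min{ y ∈ F_p : y ≥ x }, and let fl_{p+r}(x) = ⌊x⌋_{p+r} = max{ y ∈ F_{p+r} : y ≤ x } be the truncation of x to precision p+r. Let q_r(x) = (fl_{p+r}(x) − ⌊x⌋_p) / (⌈x⌉_p − ⌊x⌋_p), and let Y be a real random variable with P(Y = ⌈x⌉_p) = q_r(x)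 and P(Y = ⌊x⌋_p) = 1 − q_r(x). Then E[Y] = fl_{p+r}(x), and the relative bias satisfies E[(Y − x)/x] = (fl_{p+r}(x) − x)/x = β with |β| ≤ 2^(1−(p+r)). -/
open MeasureTheory

/-- The set of precision-`k` binary floating-point numbers
`F_k = { m · 2^e : m, e ∈ ℤ, |m| < 2^k }`. -/
def floatSet (k : ℕ) : Set ℝ :=
  {y | ∃ m e : ℤ, |m| < 2 ^ k ∧ y = (m : ℝ) * (2 : ℝ) ^ e}

lemma floatSet_mono {k l : ℕ} (h : k ≤ l) : floatSet k ⊆ floatSet l := by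
  rintro y ⟨m, e, hm, rfl⟩
  exact ⟨m, e, lt_of_lt_of_le hm (pow_le_pow_right₀ one_le_two h), rfl⟩

lemma trunc_rel_err (k : ℕ) (x : ℝ) (hx : 0 < x) (fl : ℝ)
    (hfl : IsGreatest {y ∈ floatSet k | y ≤ x} fl) :
    (x - fl) / x ≤ (2 : ℝ) ^ (1 - (k : ℤ)) := by
  set L := Int.log 2 x with hL
  set e : ℤ := L - k + 1 with he
  set t : ℝ := (2 : ℝ) ^ e with htdef
  have ht : 0 < t := zpow_pos (by norm_num) e
  have hxL : (2 : ℝ) ^ L ≤ x := Int.zpow_log_le_self (by norm_num) hx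
  have hxU : x < (2 : ℝ) ^ (L + 1) := Int.lt_zpow_succ_log_self (by norm_num) x
  have h1 : (2 : ℝ) ^ ((k : ℤ) - 1) * t ≤ x := by
    rw [htdef, ← zpow_add₀ (two_ne_zero)]
    have : (k : ℤ) - 1 + e = L := by omega
    rw [this]; exact hxL
  have h2 : x < (2 : ℝ) ^ (k : ℤ) * t := by
    rw [htdef, ← zpow_add₀ (two_ne_zero)]
    have : (k : ℤ) + e = L + 1 := by omega
    rw [this]; exact hxU
  set m : ℤ := ⌊x / t⌋ with hm
  have hm1 : (m : ℝ) ≤ x / t := Int.floor_le _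
  have hm2 : x / t < m + 1 := Int.lt_floor_add_one _
  have hm0 : 0 ≤ m := Int.floor_nonneg.2 (div_nonneg hx.le ht.le)
  have hmk : (m : ℝ) < (2 : ℝ) ^ (k : ℤ) := by
    refine lt_of_le_of_lt hm1 ?_
    rw [div_lt_iff₀ ht]; exact h2
  have hmkz : |m| < 2 ^ k := by
    rw [abs_of_nonneg hm0]
    have : ((m : ℝ)) < ((2 ^ k : ℤ) : ℝ) := by
      push_cast
      rwa [zpow_natCast] at hmk
    exact_mod_cast this
  have hmem : (m : ℝ) * t ∈ floatSet k := ⟨m, e, hmkz, rfl⟩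
  have hmle : (m : ℝ) * t ≤ x := by
    rw [← le_div_iff₀ ht]; exact hm1
  have hmfl : (m : ℝ) * t ≤ fl := hfl.2 ⟨hmem, hmle⟩
  have hxt : x - fl ≤ t := by
    have : x < (m : ℝ) * t + t := by
      have := (div_lt_iff₀ ht).1 hm2
      nlinarith
    nlinarith
  calc (x - fl) / x ≤ t / ((2 : ℝ) ^ ((k : ℤ) - 1) * t) := by
        gcongr
    _ = (2 : ℝ) ^ (1 - (k : ℤ)) := by
        rw [div_eq_iff (by positivity : (0:ℝ) < (2 : ℝ) ^ ((k : ℤ) - 1) * t).ne', ← mul_assoc,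
          ← zpow_add₀ (two_ne_zero : (2:ℝ) ≠ 0)]
        norm_num

/-- Limited-precision stochastic rounding `SR_{p,r}` has expectation
`fl_{p+r}(x)`: if `Y` equals `⌈x⌉_p` with probability
`q_r(x) = (fl_{p+r}(x) - ⌊x⌋_p)/(⌈x⌉_p - ⌊x⌋_p)` and `⌊x⌋_p` otherwise, then
`E[Y] = fl_{p+r}(x)`, and the relative bias `β = (fl_{p+r}(x) - x)/x`
satisfies `E[(Y - x)/x] = β` and `|β| ≤ 2^(1-(p+r))`. -/
theorem limited_precision_sr_bias (p r : ℕ) (hp : 1 ≤ p) (hr : 1 ≤ r)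
    (x : ℝ) (hx : 0 < x) (hxF : x ∉ floatSet p) (lo hi fl : ℝ)
    (hlo : IsGreatest {y ∈ floatSet p | y ≤ x} lo)
    (hhi : IsLeast {y ∈ floatSet p | x ≤ y} hi)
    (hfl : IsGreatest {y ∈ floatSet (p + r) | y ≤ x} fl)
    {Ω : Type*} [MeasurableSpace Ω] (μ : Measure Ω) [IsProbabilityMeasure μ]
    (Y : Ω → ℝ) (hY : Measurable Y)
    (hup : μ {ω | Y ω = hi} = ENNReal.ofReal ((fl - lo) / (hi - lo)))
    (hdown : μ {ω | Y ω = lo} = ENNReal.ofReal (1 - (fl - lo) / (hi - lo))) :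
    (∫ ω, Y ω ∂μ = fl) ∧
    (∫ ω, (Y ω - x) / x ∂μ = (fl - x) / x) ∧
    |(fl - x) / x| ≤ (2 : ℝ) ^ (1 - (p : ℤ) - (r : ℤ)) := by
  -- Basic order facts
  have hlox : lo < x := lt_of_le_of_ne hlo.1.2 (fun h => hxF (h ▸ hlo.1.1))
  have hxhi : x < hi := lt_of_le_of_ne hhi.1.2 (fun h => hxF (h ▸ hhi.1.1))
  have hflx : fl ≤ x := hfl.1.2
  have hlofl : lo ≤ fl :=
    hfl.2 ⟨floatSet_mono (Nat.le_add_right p r) hlo.1.1, hlo.1.2⟩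
  have hlohi : lo < hi := lt_trans hlox hxhi
  have hflhi : fl < hi := lt_of_le_of_lt hflx hxhi
  set q : ℝ := (fl - lo) / (hi - lo) with hqdef
  have hq0 : 0 ≤ q := div_nonneg (by linarith) (by linarith)
  have hq1 : q ≤ 1 := by
    rw [hqdef, div_le_one (by linarith)]; linarith
  -- The two events
  set A : Set Ω := Y ⁻¹' {hi} with hAdef
  set B : Set Ω := Y ⁻¹' {lo} with hBdef
  have hA : MeasurableSet A := hY (measurableSet_singleton hi)
  have hB : MeasurableSet B := hY (measurableSet_singleton lo)
  have hAeq : {ω | Y ω = hi} = A := rfl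
  have hBeq : {ω | Y ω = lo} = B := rfl
  have hdisj : Disjoint A B := by
    rw [Set.disjoint_left]
    rintro ω (h1 : Y ω = hi) (h2 : Y ω = lo)
    exact absurd (h2 ▸ h1) (by intro h; linarith)
  have hμA : μ A = ENNReal.ofReal q := by rw [← hAeq, hup]
  have hμB : μ B = ENNReal.ofReal (1 - q) := by rw [← hBeq, hdown]
  have hμAB : μ (A ∪ B) = 1 := by
    rw [measure_union hdisj hB, hμA, hμB, ← ENNReal.ofReal_add hq0 (by linarith)]
    norm_num
  have hcompl : μ (A ∪ B)ᶜ = 0 := by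
    rw [measure_compl (hA.union hB) (measure_ne_top μ _), hμAB, measure_univ, tsub_self]
  -- Y agrees a.e. with an explicit two-valued function
  set g : Ω → ℝ := fun ω => A.indicator (fun _ => hi) ω + B.indicator (fun _ => lo) ω
    with hgdef
  have hYg : Y =ᵐ[μ] g := by
    rw [Filter.eventuallyEq_iff_exists_mem]
    refine ⟨A ∪ B, ?_, ?_⟩
    · rw [MeasureTheory.mem_ae_iff, Set.compl_eq_univ_diff]
      simpa [Set.compl_eq_univ_diff] using hcompl
    · rintro ω (hω | hω)
      · have h1 : Y ω = hi := hω
        have h2 : ω ∉ B := fun hb => (Set.disjoint_left.1 hdisj) hω hb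
        simp [hgdef, Set.indicator_of_mem hω, Set.indicator_of_notMem h2, h1]
      · have h1 : Y ω = lo := hω
        have h2 : ω ∉ A := fun ha => (Set.disjoint_left.1 hdisj) ha hω
        simp [hgdef, Set.indicator_of_mem hω, Set.indicator_of_notMem h2, h1]
  have hgint : Integrable g μ :=
    ((integrable_const hi).indicator hA).add ((integrable_const lo).indicator hB)
  have hYint : Integrable Y μ := hgint.congr hYg.symm
  have hIg : ∫ ω, Y ω ∂μ = fl := by
    rw [integral_congr_ae hYg, hgdef]
    rw [integral_add ((integrable_const hi).indicator hA)
      ((integrable_const lo).indicator hB), integral_indicator_const _ hA,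
      integral_indicator_const _ hB, measureReal_def, measureReal_def, hμA, hμB,
      ENNReal.toReal_ofReal hq0, ENNReal.toReal_ofReal (by linarith)]
    have hne : hi - lo ≠ 0 := by linarith
    have hq : q * (hi - lo) = fl - lo := div_mul_cancel₀ _ hne
    simp only [smul_eq_mul]
    nlinarith [hq]
  refine ⟨hIg, ?_, ?_⟩
  · have : (fun ω => (Y ω - x) / x) = fun ω => Y ω / x - 1 := by
      funext ω; field_simp
    rw [this, integral_sub (hYint.div_const x) (integrable_const 1),
      integral_div, hIg, integral_const, measureReal_def, measure_univ]
    simp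
    field_simp
  · have habs : |(fl - x) / x| = (x - fl) / x := by
      rw [abs_div, abs_of_pos hx, abs_sub_comm, abs_of_nonneg (by linarith)]
    rw [habs]
    have := trunc_rel_err (p + r) x hx fl hfl
    have hcast : (1 : ℤ) - ((p + r : ℕ) : ℤ) = 1 - (p : ℤ) - (r : ℤ) := by push_cast; ring
    rwa [hcast] at this
end

section
/- Let p ≥ 1 and r ≥ 1 be integers and F_k = { m·2^e : m, e ∈ ℤ, |m| < 2^k } for k ∈ {p, p+r}. Let x > 0 with x ∉ F_p, set ⌊x⌋_p = max{ y ∈ F_p : y ≤ x }, ⌈x⌉_p = min{ y ∈ F_p : y ≥ x }, fl_{p+r}(x) = max{ y ∈ F_{p+r} : y ≤ x }, and q_r(x) = (fl_{p+r}(x) − ⌊x⌋_p)/(⌈x⌉_p − ⌊x⌋_p). If Y is a real random variable with P(Y = ⌈x⌉_p) = q_r(x) and P(Y = ⌊x⌋_p) = 1 − q_r(x), then the absolute bias of limited-precision stochastic rounding satisfies |E[Y] − x| ≤ 2^(1−(p+r)) · x = u_{p+r} · x. -/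
open MeasureTheory

lemma exists_float_near (k : ℕ) (hk : 1 ≤ k) (x : ℝ) (hx : 0 < x) :
    ∃ y ∈ floatSet k, y ≤ x ∧ x - y ≤ (2 : ℝ) ^ (1 - (k : ℤ)) * x := by
  set L : ℤ := Int.log 2 x with hL
  have h1 : (2 : ℝ) ^ L ≤ x := by
    have := Int.zpow_log_le_self (R := ℝ) (b := 2) one_lt_two hx
    simpa using this
  have h2 : x < (2 : ℝ) ^ (L + 1) := by
    have := Int.lt_zpow_succ_log_self (R := ℝ) (b := 2) one_lt_two x
    simpa using this
  set e : ℤ := L - (k - 1 : ℤ) with he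
  have h2e : (0 : ℝ) < (2 : ℝ) ^ e := zpow_pos two_pos e
  set m : ℤ := ⌊x / (2 : ℝ) ^ e⌋ with hm
  have hm1 : (m : ℝ) ≤ x / (2 : ℝ) ^ e := Int.floor_le _
  have hm2 : x / (2 : ℝ) ^ e < (m : ℝ) + 1 := Int.lt_floor_add_one _
  have hmnn : 0 ≤ m := Int.floor_nonneg.2 (le_of_lt (div_pos hx h2e))
  have hub : x / (2 : ℝ) ^ e < (2 : ℝ) ^ (k : ℤ) := by
    rw [div_lt_iff₀ h2e, ← zpow_add₀ (two_ne_zero (α := ℝ))]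
    have : (k : ℤ) + e = L + 1 := by omega
    rw [this]; exact h2
  have hmlt : |m| < 2 ^ k := by
    rw [abs_of_nonneg hmnn]
    have h5 : (m : ℝ) < (2 : ℝ) ^ (k : ℕ) := by
      rw [← zpow_natCast]; exact lt_of_le_of_lt hm1 hub
    exact_mod_cast h5
  refine ⟨(m : ℝ) * (2 : ℝ) ^ e, ⟨m, e, hmlt, rfl⟩, ?_, ?_⟩
  · rw [← le_div_iff₀ h2e]; exact hm1
  · have hgap : x - (m : ℝ) * (2 : ℝ) ^ e < (2 : ℝ) ^ e := by
      have := (div_lt_iff₀ h2e).1 hm2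
      nlinarith
    have hpe : (2 : ℝ) ^ e ≤ (2 : ℝ) ^ (1 - (k : ℤ)) * x := by
      have key : (2 : ℝ) ^ e * (2 : ℝ) ^ ((k : ℤ) - 1) ≤ x := by
        rw [← zpow_add₀ (two_ne_zero (α := ℝ))]
        have : e + ((k : ℤ) - 1) = L := by omega
        rw [this]; exact h1
      have h3 : (0 : ℝ) < (2 : ℝ) ^ ((k : ℤ) - 1) := zpow_pos two_pos _
      have h4 : (0 : ℝ) < (2 : ℝ) ^ (1 - (k : ℤ)) := zpow_pos two_pos _
      have hmul : (2 : ℝ) ^ (1 - (k : ℤ)) * (2 : ℝ) ^ ((k : ℤ) - 1) = 1 := by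
        rw [← zpow_add₀ (two_ne_zero (α := ℝ))]; norm_num
      nlinarith
    linarith

/-- The absolute bias of limited-precision stochastic rounding `SR_{p,r}` is
bounded by `u_{p+r} · x = 2^(1-(p+r)) · x`. -/
theorem limited_precision_sr_abs_bias (p r : ℕ) (hp : 1 ≤ p) (hr : 1 ≤ r)
    (x : ℝ) (hx : 0 < x) (hxF : x ∉ floatSet p) (lo hi fl : ℝ)
    (hlo : IsGreatest {y ∈ floatSet p | y ≤ x} lo)
    (hhi : IsLeast {y ∈ floatSet p | x ≤ y} hi)
    (hfl : IsGreatest {y ∈ floatSet (p + r) | y ≤ x} fl)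
    {Ω : Type*} [MeasurableSpace Ω] (μ : Measure Ω) [IsProbabilityMeasure μ]
    (Y : Ω → ℝ) (hY : Measurable Y)
    (hup : μ {ω | Y ω = hi} = ENNReal.ofReal ((fl - lo) / (hi - lo)))
    (hdown : μ {ω | Y ω = lo} = ENNReal.ofReal (1 - (fl - lo) / (hi - lo))) :
    |(∫ ω, Y ω ∂μ) - x| ≤ (2 : ℝ) ^ (1 - ((p : ℤ) + (r : ℤ))) * x := by
  -- basic order facts
  have hlox : lo < x := lt_of_le_of_ne hlo.1.2 (fun h => hxF (h ▸ hlo.1.1))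
  have hxhi : x < hi := lt_of_le_of_ne hhi.1.2 (fun h => hxF (h ▸ hhi.1.1))
  have hlohi : lo < hi := hlox.trans hxhi
  have hne : hi - lo ≠ 0 := by linarith
  have hlofl : lo ≤ fl := hfl.2 ⟨floatSet_mono (Nat.le_add_right p r) hlo.1.1, hlo.1.2⟩
  have hflx : fl ≤ x := hfl.1.2
  set q : ℝ := (fl - lo) / (hi - lo) with hq
  have hq0 : 0 ≤ q := div_nonneg (by linarith) (by linarith)
  have hq1 : q ≤ 1 := (div_le_one (by linarith)).2 (by linarith)
  -- the two events
  set A : Set Ω := {ω | Y ω = hi} with hA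
  set B : Set Ω := {ω | Y ω = lo} with hB
  have hAm : MeasurableSet A := hY (measurableSet_singleton hi)
  have hBm : MeasurableSet B := hY (measurableSet_singleton lo)
  have hdisj : Disjoint A B := by
    rw [Set.disjoint_left]; intro ω h1 h2
    exact absurd (h1.symm.trans h2) (ne_of_gt hlohi)
  have hAB : μ (A ∪ B) = 1 := by
    rw [measure_union hdisj hBm, hup, hdown, ← ENNReal.ofReal_add hq0 (by linarith)]
    norm_num
  have hcompl : μ (A ∪ B)ᶜ = 0 := by
    rw [measure_compl (hAm.union hBm) (measure_ne_top μ _), hAB, measure_univ, tsub_self]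
  -- Y is a.e. equal to the two-valued function g
  set g : Ω → ℝ := fun ω => lo + A.indicator (fun _ => hi - lo) ω with hg
  have hae : ∀ᵐ ω ∂μ, Y ω = g ω := by
    rw [MeasureTheory.ae_iff]
    refine measure_mono_null (fun ω hω => ?_) hcompl
    simp only [Set.mem_setOf_eq] at hω
    simp only [Set.mem_compl_iff, Set.mem_union]
    rintro (h | h)
    · exact hω (by simp only [hg, Set.indicator_of_mem h]; rw [show Y ω = hi from h]; ring)
    · have hωA : ω ∉ A := fun hA2 => (ne_of_lt hlohi) ((show Y ω = lo from h).symm.trans hA2)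
      exact hω (by simp only [hg, Set.indicator_of_notMem hωA]; rw [show Y ω = lo from h]; ring)
  have hμA : (μ A).toReal = q := by rw [hup, ENNReal.toReal_ofReal hq0]
  have hEY : (∫ ω, Y ω ∂μ) = fl := by
    rw [integral_congr_ae hae, hg]
    rw [integral_add (integrable_const lo) ((integrable_const (hi - lo)).indicator hAm)]
    rw [integral_const, integral_indicator_const _ hAm, measureReal_def, measureReal_def, hμA, measure_univ]
    simp only [ENNReal.toReal_one, one_smul, smul_eq_mul]
    rw [hq, div_mul_cancel₀ _ hne]; ring
  -- the approximation bound
  obtain ⟨y, hyF, hyx, hybd⟩ := exists_float_near (p + r) (by omega) x hx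
  have hyfl : y ≤ fl := hfl.2 ⟨hyF, hyx⟩
  have hbd : x - fl ≤ (2 : ℝ) ^ (1 - ((p : ℤ) + (r : ℤ))) * x := by
    have : (1 : ℤ) - ((p : ℕ) + (r : ℕ) : ℕ) = 1 - ((p : ℤ) + (r : ℤ)) := by push_cast; ring
    rw [← this]
    linarith
  rw [hEY, abs_of_nonpos (by linarith)]
  linarith
end
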